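/- arXiv:2512.09457 — 8 statements merged into one kernel-verified Lean document; each statement's English description precedes it below -/
import Mathlib

section
/- If B is a t-fold s-blocking set of PG(k-1,q), then |B| ≥ t(q^k - 1)/(q^{k-s} - 1). -/
open Module

variable {F : Type*} [Field F] [Fintype F]

/-- The support of a subspace `U ⊆ F^ι`: coordinates where some vector of `U` is nonzero. -/
def csupp {ι : Type*} (U : Submodule F (ι → F)) : Set ι :=
  {j | ∃ x ∈ U, x j ≠ 0}

/-- The support weight of a subspace of `F^ι`. -/
noncomputable def wt {ι : Type*} (U : Submodule F (ι → F)) : ℕ := (csupp U).ncard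

/-- `U` is an `s`-minimal subcode of `C`. -/
def IsMinimalSubcode {ι : Type*} (C U : Submodule F (ι → F)) (s : ℕ) : Prop :=
  U ≤ C ∧ Module.finrank F U = s ∧
    ∀ V : Submodule F (ι → F), V ≤ C → Module.finrank F V = s →
      csupp V ⊆ csupp U → V = U

/-- `C` is an `s`-minimal code. -/
def SMinimal {ι : Type*} (C : Submodule F (ι → F)) (s : ℕ) : Prop :=
  ∀ U : Submodule F (ι → F), U ≤ C → Module.finrank F U = s → IsMinimalSubcode C U s

/-- The `s`-th generalized Hamming weight of `C`. -/
noncomputable def dGHW {ι : Type*} (C : Submodule F (ι → F)) (s : ℕ) : ℕ :=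
  sInf {w | ∃ U : Submodule F (ι → F), U ≤ C ∧ Module.finrank F U = s ∧ wt U = w}

/-- The `s`-th maximum support weight of `C`. -/
noncomputable def DGHW {ι : Type*} (C : Submodule F (ι → F)) (s : ℕ) : ℕ :=
  sSup {w | ∃ U : Submodule F (ι → F), U ≤ C ∧ Module.finrank F U = s ∧ wt U = w}
/-- The points of `PG(k-1,q)`: the one-dimensional subspaces of `F^k`. -/
def PGpoints (F : Type*) [Field F] (k : ℕ) : Set (Submodule F (Fin k → F)) :=
  {P | Module.finrank F P = 1}

/-- `B` is a `t`-fold `s`-blocking set of `PG(k-1,q)`: every projective subspace of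
codimension `s` (i.e. `(k-s)`-dimensional linear subspace) contains at least `t` points of `B`. -/
def IsTFoldSBlocking (F : Type*) [Field F] (k : ℕ)
    (B : Set (Submodule F (Fin k → F))) (t s : ℕ) : Prop :=
  B ⊆ PGpoints F k ∧
    ∀ W : Submodule F (Fin k → F), Module.finrank F W = k - s →
      t ≤ (B ∩ {P | P ≤ W}).ncard

section Aux

/-- There is a linear automorphism taking any nonzero vector to any other. -/
private lemma exists_linequiv_aux {K V : Type*} [Field K] [AddCommGroup V] [Module K V]
    [FiniteDimensional K V] (v v' : V) (hv : v ≠ 0) (hv' : v' ≠ 0) :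
    ∃ e : V ≃ₗ[K] V, e v = v' := by
  classical
  have h1 := LinearIndepOn.singleton (R := K) (v := (id : V → V)) hv
  have h2 := LinearIndepOn.singleton (R := K) (v := (id : V → V)) hv'
  let b := Basis.extend h1
  let b' := Basis.extend h2
  haveI : Fintype (h1.extend (Set.subset_univ _)) := FiniteDimensional.fintypeBasisIndex b
  haveI : Fintype (h2.extend (Set.subset_univ _)) := FiniteDimensional.fintypeBasisIndex b'
  have hcard : Fintype.card (h1.extend (Set.subset_univ _))
      = Fintype.card (h2.extend (Set.subset_univ _)) := by
    rw [← finrank_eq_card_basis b, ← finrank_eq_card_basis b']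
  have hm1 : v ∈ h1.extend (Set.subset_univ _) := h1.subset_extend _ rfl
  have hm2 : v' ∈ h2.extend (Set.subset_univ _) := h2.subset_extend _ rfl
  let e0 := Fintype.equivOfCardEq hcard
  let g := e0.trans (Equiv.swap (e0 ⟨v, hm1⟩) ⟨v', hm2⟩)
  refine ⟨b.equiv b' g, ?_⟩
  have hb : b ⟨v, hm1⟩ = v := Basis.extend_apply_self h1 _
  calc (b.equiv b' g) v = (b.equiv b' g) (b ⟨v, hm1⟩) := by rw [hb]
    _ = b' (g ⟨v, hm1⟩) := b.equiv_apply _ b' g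
    _ = b' ⟨v', hm2⟩ := by simp [g, Equiv.swap_apply_left]
    _ = v' := Basis.extend_apply_self h2 _

open scoped Classical in
/-- Counting nonzero vectors of a submodule `P`. -/
private lemma card_filter_mem {k : ℕ} (P : Submodule F (Fin k → F)) :
    (Finset.univ.filter fun x : Fin k → F => x ∈ P ∧ x ≠ 0).card
      = Fintype.card F ^ finrank F P - 1 := by
  classical
  have h1 : (Finset.univ.filter fun x : Fin k → F => x ∈ P ∧ x ≠ 0)
      = (Finset.univ.filter fun x : Fin k → F => x ∈ P).erase 0 := by
    ext x
    simp [Finset.mem_erase, and_comm]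
  have h2 : (Finset.univ.filter fun x : Fin k → F => x ∈ P).card = Fintype.card P := by
    rw [Fintype.card_subtype]
  rw [h1, Finset.card_erase_of_mem (by simp [P.zero_mem]), h2,
    card_eq_pow_finrank (K := F) (V := P)]

open scoped Classical in
/-- The number of lines in a subspace `W`, multiplied by `q - 1`, equals `q^dim W - 1`. -/
private lemma lines_card {k : ℕ} (W : Submodule F (Fin k → F)) :
    (Finset.univ.filter fun P : Submodule F (Fin k → F) => finrank F P = 1 ∧ P ≤ W).card
      * (Fintype.card F - 1) = Fintype.card F ^ finrank F W - 1 := by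
  classical
  set S := Finset.univ.filter fun x : Fin k → F => x ∈ W ∧ x ≠ 0 with hS
  set T := Finset.univ.filter
    (fun P : Submodule F (Fin k → F) => finrank F P = 1 ∧ P ≤ W) with hT
  have hmap : ∀ x ∈ S, Submodule.span F {x} ∈ T := by
    intro x hx
    rw [hS, Finset.mem_filter] at hx
    rw [hT, Finset.mem_filter]
    exact ⟨Finset.mem_univ _, finrank_span_singleton hx.2.2,
      Submodule.span_le.mpr (Set.singleton_subset_iff.mpr hx.2.1)⟩
  have hcount := Finset.card_eq_sum_card_fiberwise hmap
  have hfib : ∀ P ∈ T, (S.filter fun x => Submodule.span F {x} = P).card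
      = Fintype.card F - 1 := by
    intro P hP
    rw [hT, Finset.mem_filter] at hP
    have heq : (S.filter fun x => Submodule.span F {x} = P)
        = Finset.univ.filter fun x : Fin k → F => x ∈ P ∧ x ≠ 0 := by
      ext x
      simp only [hS, Finset.mem_filter, Finset.mem_univ, true_and]
      constructor
      · rintro ⟨⟨hxW, hx0⟩, hsp⟩
        exact ⟨hsp ▸ Submodule.mem_span_singleton_self x, hx0⟩
      · rintro ⟨hxP, hx0⟩
        refine ⟨⟨hP.2.2 hxP, hx0⟩, ?_⟩
        exact Submodule.eq_of_le_of_finrank_eq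
          (Submodule.span_le.mpr (Set.singleton_subset_iff.mpr hxP))
          ((finrank_span_singleton hx0).trans hP.2.1.symm)
    rw [heq, card_filter_mem, hP.2.1, pow_one]
  have hSc : S.card = Fintype.card F ^ finrank F W - 1 := card_filter_mem W
  rw [Finset.sum_congr rfl hfib, Finset.sum_const, smul_eq_mul] at hcount
  rw [← hcount, hSc]

open scoped Classical in
/-- Homogeneity: every line lies in the same number of `r`-dimensional subspaces. -/
private lemma homog_card {k r : ℕ} (P P' : Submodule F (Fin k → F))
    (hP : finrank F P = 1) (hP' : finrank F P' = 1) :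
    (Finset.univ.filter fun W : Submodule F (Fin k → F) => finrank F W = r ∧ P ≤ W).card
    = (Finset.univ.filter fun W : Submodule F (Fin k → F) => finrank F W = r ∧ P' ≤ W).card := by
  classical
  obtain ⟨v, hvP, hv0⟩ := Submodule.exists_mem_ne_zero_of_ne_bot (p := P)
    (fun h => by rw [h, finrank_bot] at hP; exact absurd hP (by norm_num))
  obtain ⟨v', hvP', hv0'⟩ := Submodule.exists_mem_ne_zero_of_ne_bot (p := P')
    (fun h => by rw [h, finrank_bot] at hP'; exact absurd hP' (by norm_num))
  have hPv : Submodule.span F {v} = P :=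
    Submodule.eq_of_le_of_finrank_eq
      (Submodule.span_le.mpr (Set.singleton_subset_iff.mpr hvP))
      ((finrank_span_singleton hv0).trans hP.symm)
  have hPv' : Submodule.span F {v'} = P' :=
    Submodule.eq_of_le_of_finrank_eq
      (Submodule.span_le.mpr (Set.singleton_subset_iff.mpr hvP'))
      ((finrank_span_singleton hv0').trans hP'.symm)
  obtain ⟨e, he⟩ := exists_linequiv_aux (K := F) v v' hv0 hv0'
  have hmapP : Submodule.map (e : (Fin k → F) →ₗ[F] (Fin k → F)) P = P' := by
    rw [← hPv, Submodule.map_span, Set.image_singleton]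
    simpa [he] using hPv'
  refine Finset.card_bij' (fun W _ => Submodule.map (e : (Fin k → F) →ₗ[F] (Fin k → F)) W)
    (fun W _ => Submodule.map (e.symm : (Fin k → F) →ₗ[F] (Fin k → F)) W) ?_ ?_ ?_ ?_
  · intro W hW
    rw [Finset.mem_filter] at hW ⊢
    refine ⟨Finset.mem_univ _, ?_, ?_⟩
    · rw [LinearEquiv.finrank_map_eq e W]; exact hW.2.1
    · rw [← hmapP]; exact Submodule.map_mono hW.2.2
  · intro W hW
    rw [Finset.mem_filter] at hW ⊢
    refine ⟨Finset.mem_univ _, ?_, ?_⟩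
    · rw [LinearEquiv.finrank_map_eq e.symm W]; exact hW.2.1
    · have : Submodule.map (e.symm : (Fin k → F) →ₗ[F] (Fin k → F)) P' = P := by
        rw [← hmapP]
        ext x; simp
      rw [← this]; exact Submodule.map_mono hW.2.2
  · intro W _
    ext x; simp
  · intro W _
    ext x; simp

end Aux

/-- If `B` is a `t`-fold `s`-blocking set of `PG(k-1,q)`, then
`|B| ≥ t (q^k - 1)/(q^{k-s} - 1)` (stated in multiplied-out form). -/
theorem tfold_blocking_lower_bound (q t s k : ℕ) (hq : Fintype.card F = q)
    (hs1 : 1 ≤ s) (hs2 : s ≤ k - 1) (ht : 1 ≤ t)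
    (B : Set (Submodule F (Fin k → F))) (hB : IsTFoldSBlocking F k B t s) :
    t * (q ^ k - 1) ≤ B.ncard * (q ^ (k - s) - 1) := by
  classical
  subst hq
  set q := Fintype.card F with hq
  have hk2 : 2 ≤ k := by omega
  set r := k - s with hr
  have hr1 : 1 ≤ r := by omega
  have hrk : r ≤ k := by omega
  set Ws := Finset.univ.filter (fun W : Submodule F (Fin k → F) => finrank F W = r) with hWs
  set Ps := Finset.univ.filter (fun P : Submodule F (Fin k → F) => finrank F P = 1) with hPs
  -- a base point
  have hsingle : (Pi.single (⟨0, by omega⟩ : Fin k) (1 : F) : Fin k → F) ≠ 0 := by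
    intro h
    have := congrFun h (⟨0, by omega⟩ : Fin k)
    rw [Pi.single_eq_same] at this
    exact one_ne_zero this
  set P₀ : Submodule F (Fin k → F) := Submodule.span F {Pi.single (⟨0, by omega⟩ : Fin k) (1 : F)} with hP₀
  have hP₀1 : finrank F P₀ = 1 := finrank_span_singleton hsingle
  set N := (Finset.univ.filter
    (fun W : Submodule F (Fin k → F) => finrank F W = r ∧ P₀ ≤ W)).card with hN
  have hNP : ∀ P : Submodule F (Fin k → F), finrank F P = 1 →
      (Ws.filter fun W => P ≤ W).card = N := by
    intro P hP
    rw [hWs, Finset.filter_filter, hN]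
    exact homog_card P P₀ hP hP₀1
  -- double counting swap
  have hswap : ∀ A : Finset (Submodule F (Fin k → F)),
      ∑ W ∈ Ws, (A.filter fun P => P ≤ W).card = ∑ P ∈ A, (Ws.filter fun W => P ≤ W).card := by
    intro A
    simp only [Finset.card_filter]
    exact Finset.sum_comm
  -- B as a finset
  have hBfin : B.Finite := Set.toFinite B
  set B' := hBfin.toFinset with hB'
  have hBncard : B.ncard = B'.card := Set.ncard_eq_toFinset_card B hBfin
  have hBP : ∀ P ∈ B', finrank F P = 1 := by
    intro P hP
    rw [hB', Set.Finite.mem_toFinset] at hP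
    exact hB.1 hP
  -- Step 1 : t * |Ws| ≤ |B| * N
  have key1 : t * Ws.card ≤ B'.card * N := by
    have h1 : t * Ws.card ≤ ∑ W ∈ Ws, (B'.filter fun P => P ≤ W).card := by
      have : t * Ws.card = ∑ _W ∈ Ws, t := by
        rw [Finset.sum_const, smul_eq_mul, mul_comm]
      rw [this]
      refine Finset.sum_le_sum ?_
      intro W hW
      rw [hWs, Finset.mem_filter] at hW
      have := hB.2 W (by rw [hW.2])
      have heq : B ∩ {P | P ≤ W} = ↑(B'.filter fun P => P ≤ W) := by
        ext P
        simp only [Set.mem_inter_iff, Set.mem_setOf_eq, Finset.coe_filter, hB',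
          Set.Finite.mem_toFinset]
      rw [heq, Set.ncard_coe_finset] at this
      simpa using this
    have h2 : ∑ W ∈ Ws, (B'.filter fun P => P ≤ W).card = B'.card * N := by
      rw [hswap B']
      rw [Finset.sum_congr rfl (fun P hP => hNP P (hBP P hP)), Finset.sum_const, smul_eq_mul]
    omega
  -- Step 2 : |Ws| * (q^r - 1) = N * (q^k - 1)
  have hlinesW : ∀ W ∈ Ws, (Ps.filter fun P => P ≤ W).card * (q - 1) = q ^ r - 1 := by
    intro W hW
    rw [hWs, Finset.mem_filter] at hW
    have := lines_card (F := F) W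
    rw [hW.2] at this
    rw [hPs, Finset.filter_filter]
    exact this
  have hlinesTop : Ps.card * (q - 1) = q ^ k - 1 := by
    have := lines_card (F := F) (⊤ : Submodule F (Fin k → F))
    rw [finrank_top, Module.finrank_fin_fun] at this
    rw [hPs]
    simpa using this
  have key2 : Ws.card * (q ^ r - 1) = N * (q ^ k - 1) := by
    calc Ws.card * (q ^ r - 1) = ∑ _W ∈ Ws, (q ^ r - 1) := by
          rw [Finset.sum_const, smul_eq_mul]
      _ = ∑ W ∈ Ws, (Ps.filter fun P => P ≤ W).card * (q - 1) :=
          (Finset.sum_congr rfl (fun W hW => (hlinesW W hW).symm))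
      _ = (∑ W ∈ Ws, (Ps.filter fun P => P ≤ W).card) * (q - 1) := by
          rw [Finset.sum_mul]
      _ = (∑ P ∈ Ps, (Ws.filter fun W => P ≤ W).card) * (q - 1) := by rw [hswap Ps]
      _ = (Ps.card * N) * (q - 1) := by
          rw [Finset.sum_congr rfl (fun P hP => hNP P (by
            rw [hPs, Finset.mem_filter] at hP; exact hP.2)), Finset.sum_const, smul_eq_mul]
      _ = N * (Ps.card * (q - 1)) := by ring
      _ = N * (q ^ k - 1) := by rw [hlinesTop]
  -- Ws is nonempty
  have hWspos : 0 < Ws.card := by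
    obtain ⟨f, hf⟩ := exists_linearIndependent_of_le_finrank
      (R := F) (M := Fin k → F) (n := r) (by rw [Module.finrank_fin_fun]; exact hrk)
    have : Submodule.span F (Set.range f) ∈ Ws := by
      rw [hWs, Finset.mem_filter]
      exact ⟨Finset.mem_univ _, by rw [finrank_span_eq_card hf, Fintype.card_fin]⟩
    exact Finset.card_pos.mpr ⟨_, this⟩
  -- finish
  have final : t * (q ^ k - 1) * Ws.card ≤ B'.card * (q ^ r - 1) * Ws.card := by
    calc t * (q ^ k - 1) * Ws.card = t * Ws.card * (q ^ k - 1) := by ring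
      _ ≤ B'.card * N * (q ^ k - 1) := Nat.mul_le_mul_right _ key1
      _ = B'.card * (N * (q ^ k - 1)) := by ring
      _ = B'.card * (Ws.card * (q ^ r - 1)) := by rw [← key2]
      _ = B'.card * (q ^ r - 1) * Ws.card := by ring
  have := Nat.le_of_mul_le_mul_right final hWspos
  rw [hBncard]
  exact this
end

section
/- Let B be a t-fold s-blocking set of PG(k-1,q) with t ≤ q whose complement spans PG(k-1,q). Then |B| ≥ t(q^{s+1}-1)/(q-1). -/
open Module

variable {F : Type*} [Field F] [Fintype F]

instance submoduleFinite {k : ℕ} : Finite (Submodule F (Fin k → F)) :=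
  Finite.of_injective (fun S => (S : Set (Fin k → F))) SetLike.coe_injective

lemma case1 (q t s k : ℕ) (hq : Fintype.card F = q) (hsk : s + 1 ≤ k)
    (B : Set (Submodule F (Fin k → F)))
    (hBpts : B ⊆ PGpoints F k)
    (hblock : ∀ W : Submodule F (Fin k → F), Module.finrank F W = k - s →
      t ≤ (B ∩ {P | P ≤ W}).ncard)
    (S : Submodule F (Fin k → F)) (hS : Module.finrank F S = k - s - 1)
    (hSB : B ∩ {P | P ≤ S} = ∅) :
    t * (q ^ (s + 1) - 1) ≤ B.ncard * (q - 1) := by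
  classical
  have hBfin : B.Finite := Set.toFinite B
  have hfinM : Module.finrank F (Fin k → F) = k := Module.finrank_fin_fun F
  set V := (Fin k → F) ⧸ S with hV
  have hfinV : Module.finrank F V = s + 1 := by
    show Module.finrank F ((Fin k → F) ⧸ S) = s + 1
    have h := Submodule.finrank_quotient_add_finrank S
    rw [hfinM, hS] at h
    omega
  have : Fintype V := Fintype.ofFinite V
  have hcardV : Fintype.card V = q ^ (s + 1) := by
    rw [card_eq_pow_finrank (K := F), hq, hfinV]
  set π := S.mkQ with hπ
  set Wv : V → Submodule F (Fin k → F) := fun v => Submodule.comap π (Submodule.span F {v}) with hWv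
  have hle : ∀ v : V, S ≤ Wv v := by
    intro v x hx
    show π x ∈ Submodule.span F {v}
    have : π x = 0 := by
      rw [hπ, Submodule.mkQ_apply, Submodule.Quotient.mk_eq_zero]
      exact hx
    rw [this]; exact zero_mem _
  have hWrank : ∀ v : V, v ≠ 0 → Module.finrank F (Wv v) = k - s := by
    intro v hv
    have h1 := LinearMap.finrank_range_add_finrank_ker (π.comp (Wv v).subtype)
    have hrange : LinearMap.range (π.comp (Wv v).subtype) = Submodule.span F {v} := by
      rw [LinearMap.range_comp, Submodule.range_subtype]
      exact Submodule.map_comap_eq_of_surjective S.mkQ_surjective _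
    have hker : LinearMap.ker (π.comp (Wv v).subtype) = Submodule.comap (Wv v).subtype S := by
      rw [LinearMap.ker_comp, hπ, Submodule.ker_mkQ]
    rw [hrange, hker] at h1
    have h2 : Module.finrank F (Submodule.comap (Wv v).subtype S) = k - s - 1 := by
      rw [← hS]
      exact (LinearEquiv.finrank_eq (Submodule.comapSubtypeEquivOfLe (hle v)))
    have h3 : Module.finrank F (Submodule.span F {v}) = 1 := finrank_span_singleton hv
    rw [h2, h3] at h1
    omega
  let Bf : Finset (Submodule F (Fin k → F)) := hBfin.toFinset
  have hBcard : Bf.card = B.ncard := (Set.ncard_eq_toFinset_card B hBfin).symm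
  have hfilter : ∀ W : Submodule F (Fin k → F),
      (B ∩ {P | P ≤ W}).ncard = (Bf.filter (fun P => P ≤ W)).card := by
    intro W
    rw [← Set.ncard_coe_finset]
    congr 1
    ext P
    simp [Bf, Set.Finite.mem_toFinset]
  have hQcount : ∀ Q ∈ Bf, ((Finset.univ.erase (0 : V)).filter (fun v => Q ≤ Wv v)).card
      = q - 1 := by
    intro Q hQ
    have hQB : Q ∈ B := hBfin.mem_toFinset.1 hQ
    have hQ1 : Module.finrank F Q = 1 := hBpts hQB
    have hQS : ¬ Q ≤ S := by
      intro hqs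
      have : Q ∈ B ∩ {P | P ≤ S} := ⟨hQB, hqs⟩
      rw [hSB] at this
      exact this
    have hQbot : Q ≠ ⊥ := by
      intro h; rw [h, finrank_bot] at hQ1; exact one_ne_zero hQ1.symm
    obtain ⟨u, huQ, hu0⟩ := Submodule.exists_mem_ne_zero_of_ne_bot hQbot
    have hspanQ : Submodule.span F {u} = Q := by
      apply Submodule.eq_of_le_of_finrank_le
      · rwa [Submodule.span_singleton_le_iff_mem]
      · rw [hQ1, finrank_span_singleton hu0]
    have hubar : π u ≠ 0 := by
      intro h
      rw [hπ, Submodule.mkQ_apply, Submodule.Quotient.mk_eq_zero] at h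
      exact hQS (hspanQ ▸ (Submodule.span_singleton_le_iff_mem u S).2 h)
    have hiff : ∀ v : V, (Q ≤ Wv v ↔ π u ∈ Submodule.span F {v}) := by
      intro v
      rw [← hspanQ, Submodule.span_singleton_le_iff_mem]
      exact Iff.rfl
    have himage : (Finset.univ.erase (0 : V)).filter (fun v => Q ≤ Wv v)
        = (Finset.univ.erase (0 : F)).image (fun c : F => c • (π u)) := by
      ext v
      simp only [Finset.mem_filter, Finset.mem_erase, Finset.mem_image, Finset.mem_univ,
        and_true, true_and]
      constructor
      · rintro ⟨hv0, hvW⟩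
        rw [hiff v, Submodule.mem_span_singleton] at hvW
        obtain ⟨a, ha⟩ := hvW
        have ha0 : a ≠ 0 := by rintro rfl; rw [zero_smul] at ha; exact hubar ha.symm
        exact ⟨a⁻¹, inv_ne_zero ha0, by rw [← ha, smul_smul, inv_mul_cancel₀ ha0, one_smul]⟩
      · rintro ⟨c, hc0, rfl⟩
        refine ⟨smul_ne_zero hc0 hubar, ?_⟩
        rw [hiff _, Submodule.mem_span_singleton]
        exact ⟨c⁻¹, by rw [smul_smul, inv_mul_cancel₀ hc0, one_smul]⟩
    rw [himage, Finset.card_image_of_injective _ (smul_left_injective F hubar),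
      Finset.card_erase_of_mem (Finset.mem_univ _), Finset.card_univ, hq]
  calc t * (q ^ (s + 1) - 1)
      = ∑ _v ∈ Finset.univ.erase (0 : V), t := by
        rw [Finset.sum_const, smul_eq_mul,
          Finset.card_erase_of_mem (Finset.mem_univ _), Finset.card_univ, hcardV, mul_comm]
    _ ≤ ∑ v ∈ Finset.univ.erase (0 : V), (Bf.filter (fun Q => Q ≤ Wv v)).card := by
        apply Finset.sum_le_sum
        intro v hv
        have hv0 : v ≠ 0 := (Finset.mem_erase.1 hv).1
        have := hblock (Wv v) (hWrank v hv0)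
        rwa [hfilter] at this
    _ = ∑ v ∈ Finset.univ.erase (0 : V), ∑ Q ∈ Bf, if Q ≤ Wv v then 1 else 0 :=
        Finset.sum_congr rfl fun v _ => Finset.card_filter _ _
    _ = ∑ Q ∈ Bf, ∑ v ∈ Finset.univ.erase (0 : V), if Q ≤ Wv v then 1 else 0 :=
        Finset.sum_comm
    _ = ∑ Q ∈ Bf, ((Finset.univ.erase (0 : V)).filter (fun v => Q ≤ Wv v)).card :=
        Finset.sum_congr rfl fun Q _ => (Finset.card_filter _ _).symm
    _ = ∑ _Q ∈ Bf, (q - 1) := Finset.sum_congr rfl hQcount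
    _ = B.ncard * (q - 1) := by rw [Finset.sum_const, smul_eq_mul, hBcard]

lemma aux_step (q k : ℕ) (hq : Fintype.card F = q) (t s : ℕ)
    (ht : 1 ≤ t) (htq : t ≤ q) (hs1 : 1 ≤ s) (hs2 : s ≤ k - 1)
    (B : Set (Submodule F (Fin k → F))) (hB : IsTFoldSBlocking F k B t s)
    (rec : 1 ≤ k - s - 1 → s + 1 ≤ k - 1 → IsTFoldSBlocking F k B 1 (s + 1) →
      1 * (q ^ (s + 2) - 1) ≤ B.ncard * (q - 1)) :
    t * (q ^ (s + 1) - 1) ≤ B.ncard * (q - 1) := by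
  classical
  have hsk : s + 1 ≤ k := by omega
  by_cases h : ∃ S : Submodule F (Fin k → F),
      Module.finrank F S = k - s - 1 ∧ B ∩ {P | P ≤ S} = ∅
  · obtain ⟨S, hS1, hS2⟩ := h
    exact case1 q t s k hq hsk B hB.1 hB.2 S hS1 hS2
  · push_neg at h
    have hk1 : 1 ≤ k - s - 1 := by
      by_contra h0
      obtain ⟨P, hP, hle⟩ := h ⊥ (by rw [finrank_bot]; omega)
      have h1 : Module.finrank F P = 1 := hB.1 hP
      rw [Set.mem_setOf_eq, le_bot_iff] at hle
      rw [hle, finrank_bot] at h1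
      exact one_ne_zero h1.symm
    have hB' : IsTFoldSBlocking F k B 1 (s + 1) := by
      refine ⟨hB.1, fun W hW => ?_⟩
      have hW' : Module.finrank F W = k - s - 1 := by omega
      have hne := h W hW'
      have hfin : (B ∩ {P | P ≤ W}).Finite := Set.toFinite _
      exact (Set.ncard_pos hfin).2 hne
    have hrec := rec hk1 (by omega) hB'
    have hq1 : 1 ≤ q := le_trans ht htq
    have hx : 1 ≤ q ^ (s + 1) := Nat.one_le_pow _ _ (by omega)
    have key : t * (q ^ (s + 1) - 1) ≤ q ^ (s + 2) - 1 := by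
      obtain ⟨m, hm⟩ := Nat.exists_eq_add_of_le hx
      have he : q ^ (s + 2) = q * q ^ (s + 1) := by ring
      have h1 : t * m ≤ q * m := Nat.mul_le_mul_right m htq
      have h2 : q * (1 + m) = q * m + q := by ring
      rw [hm] at he ⊢
      rw [he, h2]
      simp only [Nat.add_sub_cancel_left]
      omega
    calc t * (q ^ (s + 1) - 1) ≤ q ^ (s + 2) - 1 := key
      _ = 1 * (q ^ (s + 2) - 1) := (one_mul _).symm
      _ ≤ B.ncard * (q - 1) := hrec

lemma aux_blocking (q k : ℕ) (hq : Fintype.card F = q) :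
    ∀ n t s : ℕ, k - 1 - s ≤ n → 1 ≤ t → t ≤ q → 1 ≤ s → s ≤ k - 1 →
      ∀ B : Set (Submodule F (Fin k → F)), IsTFoldSBlocking F k B t s →
      t * (q ^ (s + 1) - 1) ≤ B.ncard * (q - 1) := by
  intro n
  induction n with
  | zero =>
    intro t s hns ht htq hs1 hs2 B hB
    exact aux_step q k hq t s ht htq hs1 hs2 B hB (fun h1 _ _ => absurd hns (by omega))
  | succ n ih =>
    intro t s hns ht htq hs1 hs2 B hB
    refine aux_step q k hq t s ht htq hs1 hs2 B hB (fun h1 h2 hB' => ?_)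
    have := ih 1 (s + 1) (by omega) le_rfl (le_trans ht htq) (by omega) h2 B hB'
    exact this

/-- If `B` is a `t`-fold `s`-blocking set of `PG(k-1,q)` with `t ≤ q` whose
complement spans `PG(k-1,q)`, then `|B| ≥ t (q^{s+1} - 1)/(q - 1)` (multiplied-out form). -/
theorem tfold_blocking_complement_spanning (q t s k : ℕ) (hq : Fintype.card F = q)
    (hs1 : 1 ≤ s) (hs2 : s ≤ k - 1) (ht : 1 ≤ t) (htq : t ≤ q)
    (B : Set (Submodule F (Fin k → F))) (hB : IsTFoldSBlocking F k B t s)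
    (hspan : sSup (PGpoints F k \ B) = (⊤ : Submodule F (Fin k → F))) :
    t * (q ^ (s + 1) - 1) ≤ B.ncard * (q - 1) := by
  exact aux_blocking q k hq (k - 1 - s) t s le_rfl ht htq hs1 hs2 B hB
end

section
/- Let C be an [n,k]_q linear code. An s-dimensional subcode U of C is an s-minimal subcode if and only if the rank of H(supp(U)), the submatrix of a parity-check matrix H consisting of the columns indexed by supp(U), equals |supp(U)| - s. -/
open Module

variable {F : Type*} [Field F] [Fintype F]

attribute [local instance] Classical.propDecidable

/-- an `s`-dimensional subcode `U` of `C` is `s`-minimal iff the submatrix of a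
parity-check matrix `H` of `C` consisting of the columns indexed by `supp(U)` has rank
`|supp(U)| - s`. -/
theorem isMinimalSubcode_iff_parity_check_rank (n k s : ℕ)
    (C : Submodule F (Fin n → F)) (hC : Module.finrank F C = k)
    (H : Matrix (Fin (n - k)) (Fin n) F)
    (hH : LinearMap.ker H.mulVecLin = C)
    (U : Submodule F (Fin n → F)) (hU : U ≤ C) (hUs : Module.finrank F U = s) :
    IsMinimalSubcode C U s ↔
      Matrix.rank (H.submatrix id (fun j : ↥(csupp U) => (j : Fin n)))
        = (csupp U).ncard - s := by
  classical
  set X := csupp U with hX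
  -- the subspace of vectors vanishing outside X
  let P : Submodule F (Fin n → F) :=
    { carrier := {x | ∀ j, j ∉ X → x j = 0}
      add_mem' := fun ha hb j hj => by simp [ha j hj, hb j hj]
      zero_mem' := fun j hj => rfl
      smul_mem' := fun c a ha j hj => by simp [ha j hj] }
  have hmemP : ∀ x : Fin n → F, x ∈ P ↔ ∀ j, j ∉ X → x j = 0 := fun x => Iff.rfl
  have hUP : U ≤ P := by
    intro x hx j hj
    by_contra h
    exact hj ⟨x, hx, h⟩
  have hPsupp : ∀ V : Submodule F (Fin n → F), V ≤ P → csupp V ⊆ X := by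
    intro V hVP j hj
    obtain ⟨x, hxV, hxj⟩ := hj
    by_contra hjX
    exact hxj (hVP hxV j hjX)
  have hsuppP : ∀ V : Submodule F (Fin n → F), csupp V ⊆ X → V ≤ P := by
    intro V hVs x hx j hj
    by_contra h
    exact hj (hVs ⟨x, hx, h⟩)
  set W := C ⊓ P with hW
  have hUW : U ≤ W := le_inf hU hUP
  set M := H.submatrix id (fun j : ↥X => (j : Fin n)) with hM
  -- key matrix fact
  have hMulVec : ∀ x ∈ P, M.mulVec (fun j : ↥X => x j) = H.mulVec x := by
    intro x hx
    funext i
    show ∑ j : ↥X, H i (j : Fin n) * x j = ∑ j : Fin n, H i j * x j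
    calc ∑ j : ↥X, H i (j : Fin n) * x j
        = ∑ j ∈ X.toFinset, H i j * x j :=
          (Finset.sum_subtype X.toFinset (fun j => Set.mem_toFinset) (fun j => H i j * x j)).symm
      _ = ∑ j : Fin n, H i j * x j := by
          refine Finset.sum_subset (Finset.subset_univ _) ?_
          intro j _ hj
          rw [hx j (by simpa using hj), mul_zero]
  -- finrank of W equals nullity of M
  have hkerW : finrank F (LinearMap.ker M.mulVecLin) = finrank F W := by
    let f : W →ₗ[F] (↥X → F) := (LinearMap.funLeft F F (Subtype.val : ↥X → Fin n)).domRestrict W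
    have hf : ∀ (x : W) (j : ↥X), f x j = (x : Fin n → F) j := fun x j => rfl
    have hinj : Function.Injective f := by
      intro x y hxy
      ext j
      by_cases hj : j ∈ X
      · have := congrFun hxy ⟨j, hj⟩
        simpa [hf] using this
      · rw [x.2.2 j hj, y.2.2 j hj]
    have hrange : LinearMap.range f = LinearMap.ker M.mulVecLin := by
      apply le_antisymm
      · rintro _ ⟨x, rfl⟩
        have : M.mulVec (f x) = H.mulVec (x : Fin n → F) := hMulVec _ x.2.2
        have hxC : H.mulVec (x : Fin n → F) = 0 := by
          have := x.2.1
          rw [← hH] at this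
          exact this
        simpa [LinearMap.mem_ker, Matrix.mulVecLin_apply, this] using hxC
      · intro y hy
        set x : Fin n → F := fun j => if h : j ∈ X then y ⟨j, h⟩ else 0 with hxdef
        have hxP : x ∈ P := by
          intro j hj
          simp [hxdef, hj]
        have hxy : (fun j : ↥X => x j) = y := by
          funext j
          simp [hxdef, j.2]
        have hxC : x ∈ C := by
          rw [← hH]
          have := hMulVec x hxP
          rw [hxy] at this
          simpa [LinearMap.mem_ker, Matrix.mulVecLin_apply, this] using hy
        exact ⟨⟨x, hxC, hxP⟩, hxy⟩
    calc finrank F (LinearMap.ker M.mulVecLin) = finrank F (LinearMap.range f) := by rw [hrange]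
    _ = finrank F W := ((LinearEquiv.ofInjective f hinj).finrank_eq).symm
  -- rank-nullity
  have hcard : finrank F (↥X → F) = X.ncard := by
    rw [Module.finrank_pi, ← Nat.card_coe_set_eq, Nat.card_eq_fintype_card]
  have hrn : Matrix.rank M + finrank F W = X.ncard := by
    rw [← hkerW, ← hcard]
    exact LinearMap.finrank_range_add_finrank_ker M.mulVecLin
  have hsW : s ≤ finrank F W := hUs ▸ Submodule.finrank_mono hUW
  -- minimality iff W = U
  have hmin : IsMinimalSubcode C U s ↔ W = U := by
    constructor
    · intro hm
      refine le_antisymm ?_ hUW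
      intro w hw
      by_contra hwU
      have hw0 : w ≠ 0 := fun h => hwU (h ▸ U.zero_mem)
      obtain _ | m := s
      · have hUbot : U = ⊥ := Submodule.finrank_eq_zero.mp hUs
        apply hw0
        funext j
        refine hw.2 j ?_
        rintro ⟨x, hxU, hxj⟩
        rw [hUbot] at hxU
        exact hxj (by simp_all)
      · obtain b := Module.finBasisOfFinrankEq F U hUs
        set v : Fin m → (Fin n → F) := fun i => (b i.castSucc : Fin n → F) with hv
        have hli : LinearIndependent F v :=
          ((b.linearIndependent.comp Fin.castSucc (Fin.castSucc_injective m)).map'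
            U.subtype U.ker_subtype)
        set U₀ := Submodule.span F (Set.range v) with hU₀
        have hU₀U : U₀ ≤ U := by
          rw [hU₀, Submodule.span_le]
          rintro _ ⟨i, rfl⟩
          exact (b i.castSucc).2
        have hwU₀ : w ∉ U₀ := fun h => hwU (hU₀U h)
        have hrU₀ : finrank F U₀ = m := by
          rw [hU₀, finrank_span_eq_card hli, Fintype.card_fin]
        set V := U₀ ⊔ Submodule.span F {w} with hV
        have hdisj : U₀ ⊓ Submodule.span F {w} = ⊥ := by
          rw [eq_bot_iff]
          rintro x ⟨hx0, hxw⟩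
          obtain ⟨c, rfl⟩ := Submodule.mem_span_singleton.mp hxw
          rcases eq_or_ne c 0 with rfl | hc
          · simp
          · exact absurd (by simpa [smul_smul, inv_mul_cancel₀ hc] using U₀.smul_mem c⁻¹ hx0) hwU₀
        have hrV : finrank F V = m + 1 := by
          have := Submodule.finrank_sup_add_finrank_inf_eq U₀ (Submodule.span F {w})
          rw [hdisj, hrU₀, finrank_span_singleton hw0] at this
          simpa [hV] using this
        have hVC : V ≤ C := sup_le (hU₀U.trans hU) ((Submodule.span_singleton_le_iff_mem _ _).mpr hw.1)
        have hVP : V ≤ P := sup_le (hU₀U.trans hUP) ((Submodule.span_singleton_le_iff_mem _ _).mpr hw.2)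
        have hVU : V = U := hm.2.2 V hVC hrV (hPsupp V hVP)
        exact hwU (hVU ▸ le_sup_right (a := U₀) (Submodule.mem_span_singleton_self w))
    · intro hWU
      refine ⟨hU, hUs, fun V hVC hVs hVsupp => ?_⟩
      have hVW : V ≤ W := le_inf hVC (hsuppP V hVsupp)
      rw [hWU] at hVW
      exact Submodule.eq_of_le_of_finrank_eq hVW (by rw [hVs, hUs])
  have hWfr : W = U ↔ finrank F W = s := by
    constructor
    · intro h; rw [h, hUs]
    · intro h
      exact (Submodule.eq_of_le_of_finrank_eq hUW (by rw [hUs, h])).symm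
  rw [hmin, hWfr]
  omega
end

section
/- If U is an s-minimal subcode of an [n,k]_q linear code C, then |supp(U)| ≤ n - k + s. -/
open Module

variable {F : Type*} [Field F] [Fintype F]

/-- if `U` is an `s`-minimal subcode of an `[n,k]_q` code `C`,
then `|supp(U)| ≤ n - k + s`. -/
theorem supp_le_of_isMinimalSubcode (n k s : ℕ)
    (C : Submodule F (Fin n → F)) (hC : Module.finrank F C = k)
    (U : Submodule F (Fin n → F)) (hmin : IsMinimalSubcode C U s) :
    (csupp U).ncard ≤ n - k + s := by
  classical
  obtain ⟨hUC, hU, hminimal⟩ := hmin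
  -- trivial case s = 0
  rcases Nat.eq_zero_or_pos s with hs0 | hs0
  · subst hs0
    have : U = ⊥ := Submodule.finrank_eq_zero.mp hU
    have : csupp U = ∅ := by
      ext j; simp [csupp, this]
    simp [this]
  obtain ⟨m, rfl⟩ : ∃ m, s = m + 1 := ⟨s - 1, by omega⟩
  set T : Set (Fin n) := csupp U with hT
  set Tc : Finset (Fin n) := T.toFinsetᶜ with hTc
  have hmemTc : ∀ j : Fin n, j ∈ Tc ↔ j ∉ T := by
    intro j; simp [hTc]
  -- projection to coordinates outside T
  set π : (Fin n → F) →ₗ[F] (↥Tc → F) := LinearMap.funLeft F F (Subtype.val) with hπ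
  have hkerπ : ∀ x : Fin n → F, x ∈ LinearMap.ker π ↔ ∀ j ∉ T, x j = 0 := by
    intro x
    constructor
    · intro h j hj
      have := congrFun (LinearMap.mem_ker.mp h) ⟨j, (hmemTc j).mpr hj⟩
      simpa [hπ, LinearMap.funLeft] using this
    · intro h
      apply LinearMap.mem_ker.mpr
      funext j
      exact h j.1 ((hmemTc j.1).mp j.2)
  set K : Submodule F (Fin n → F) := C ⊓ LinearMap.ker π with hK
  have hUK : U ≤ K := by
    intro u hu
    refine ⟨hUC hu, (hkerπ u).mpr ?_⟩
    intro j hj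
    by_contra h
    exact hj ⟨u, hu, h⟩
  -- K = U by minimality
  have hKU : K ≤ U := by
    intro x hx
    by_contra hxU
    have hUfin : FiniteDimensional F U := FiniteDimensional.of_finrank_pos (by omega)
    let b : Basis (Fin (m + 1)) F U := finBasisOfFinrankEq F U hU
    have hbli : LinearIndependent F (fun i : Fin (m + 1) => (b i : Fin n → F)) :=
      b.linearIndependent.map' U.subtype (Submodule.ker_subtype U)
    set w : Fin m → (Fin n → F) := fun i => (b i.castSucc : Fin n → F) with hw
    have hwli : LinearIndependent F w :=
      hbli.comp Fin.castSucc (Fin.castSucc_injective m)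
    have hwU : Submodule.span F (Set.range w) ≤ U := by
      rw [Submodule.span_le]
      rintro - ⟨i, rfl⟩
      exact (b i.castSucc).2
    set v : Fin (m + 1) → (Fin n → F) := Fin.snoc w x with hv
    have hvli : LinearIndependent F v :=
      linearIndependent_fin_snoc.mpr ⟨hwli, fun hmem => hxU (hwU hmem)⟩
    set V : Submodule F (Fin n → F) := Submodule.span F (Set.range v) with hV
    have hVK : V ≤ K := by
      rw [hV, Submodule.span_le]
      rintro - ⟨i, rfl⟩
      rcases Fin.eq_castSucc_or_eq_last i with ⟨j, rfl⟩ | rfl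
      · simpa [hv] using hUK (b j.castSucc).2
      · simpa [hv] using hx
    have hVC : V ≤ C := hVK.trans inf_le_left
    have hVrank : Module.finrank F V = m + 1 := by
      rw [hV, finrank_span_eq_card hvli, Fintype.card_fin]
    have hVsupp : csupp V ⊆ csupp U := by
      rintro j ⟨y, hy, hyj⟩
      by_contra hjT
      exact hyj ((hkerπ y).mp (hVK hy).2 j hjT)
    have hVU : V = U := hminimal V hVC hVrank hVsupp
    apply hxU
    rw [← hVU, hV]
    apply Submodule.subset_span
    exact ⟨Fin.last m, by simp [hv]⟩
  have hKrank : Module.finrank F K = m + 1 := by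
    rw [le_antisymm hKU hUK, hU]
  -- rank-nullity
  set f : C →ₗ[F] (↥Tc → F) := π.domRestrict C with hf
  have hker : Module.finrank F (LinearMap.ker f) = m + 1 := by
    have : LinearMap.ker f = Submodule.comap C.subtype (LinearMap.ker π) := by
      ext x; simp [hf, LinearMap.mem_ker]
    rw [this, ← Submodule.finrank_map_subtype_eq, Submodule.map_comap_subtype, ← hK, hKrank]
  have hrange : Module.finrank F (LinearMap.range f) ≤ Tc.card := by
    calc Module.finrank F (LinearMap.range f) ≤ Module.finrank F (↥Tc → F) :=
          Submodule.finrank_le _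
      _ = Tc.card := by rw [Module.finrank_pi, Fintype.card_coe]
  have hrn : Module.finrank F C =
      Module.finrank F (LinearMap.range f) + Module.finrank F (LinearMap.ker f) :=
    (LinearMap.finrank_range_add_finrank_ker f).symm
  have hTn : T.ncard ≤ n := by
    simpa [Set.ncard_univ] using Set.ncard_le_ncard (Set.subset_univ T) (Set.finite_univ)
  have hTcard : Tc.card = n - T.ncard := by
    rw [hTc, Finset.card_compl, Set.ncard_eq_toFinset_card' T]
    simp
  have hkn : k ≤ n := by
    rw [← hC]
    simpa using Submodule.finrank_le C
  have : k ≤ n - T.ncard + (m + 1) := by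
    rw [← hC, hrn, hker, ← hTcard]
    omega
  omega
end

section
/- Let C be an [n,k]_q linear code with 1 ≤ s ≤ k-1. If U is an s-dimensional subcode of C with |supp(U)| < d_{s+1}(C), then U is an s-minimal subcode of C. -/
open Module

variable {F : Type*} [Field F] [Fintype F]

/-- an `s`-dimensional subcode of support weight less than `d_{s+1}(C)`
is an `s`-minimal subcode. -/
theorem isMinimalSubcode_of_wt_lt_dGHW (n k s : ℕ) (hs1 : 1 ≤ s) (hs2 : s ≤ k - 1)
    (C : Submodule F (Fin n → F)) (hC : Module.finrank F C = k)
    (U : Submodule F (Fin n → F)) (hU : U ≤ C) (hUs : Module.finrank F U = s)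
    (hw : wt U < dGHW C (s + 1)) :
    IsMinimalSubcode C U s := by
  refine ⟨hU, hUs, fun V hV hVs hsub => ?_⟩
  by_contra hne
  -- V is not contained in U (else equal by dimension)
  have hVnleU : ¬ V ≤ U := fun hle => hne (Submodule.eq_of_le_of_finrank_le hle (by rw [hUs, hVs]))
  obtain ⟨x, hxV, hxU⟩ := SetLike.not_le_iff_exists.mp hVnleU
  -- W := U ⊔ span {x} has dimension s + 1
  set W := U ⊔ (F ∙ x) with hW
  have hxne : x ≠ 0 := fun h => hxU (h ▸ U.zero_mem)
  have hinf : U ⊓ (F ∙ x) = ⊥ := by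
    rw [Submodule.eq_bot_iff]
    rintro y ⟨hyU, hyx⟩
    obtain ⟨c, rfl⟩ := Submodule.mem_span_singleton.mp hyx
    by_contra hy0
    have hc : c ≠ 0 := fun h => hy0 (by simp [h])
    exact hxU (by simpa [smul_smul, inv_mul_cancel₀ hc] using U.smul_mem c⁻¹ hyU)
  have hdimW : Module.finrank F W = s + 1 := by
    have := Submodule.finrank_sup_add_finrank_inf_eq U (F ∙ x)
    rw [hinf, finrank_bot, add_zero, hUs, finrank_span_singleton hxne] at this
    exact this
  have hWC : W ≤ C := sup_le hU (Submodule.span_le.mpr (by simpa using hV hxV))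
  -- csupp W ⊆ csupp U
  have hcsupp : csupp W ⊆ csupp U := by
    rintro j ⟨y, hyW, hyj⟩
    rcases Submodule.mem_sup.mp hyW with ⟨u, hu, v, hv, rfl⟩
    by_cases hu0 : u j = 0
    · have hvV : v ∈ V := Submodule.span_le.mpr (by simpa using hxV) hv
      exact hsub ⟨v, hvV, fun h => hyj (by simpa [h] using hu0)⟩
    · exact ⟨u, hu, hu0⟩
  have hwtW : wt W ≤ wt U := Set.ncard_le_ncard hcsupp (Set.toFinite _)
  have hd : dGHW C (s + 1) ≤ wt W := Nat.sInf_le ⟨W, hWC, hdimW, rfl⟩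
  omega
end

section
/- Let C be an [n,k]_q linear code with 1 ≤ s ≤ k-1. If U is an s-dimensional subcode of C with |supp(U)| < ((q^{s+1}-1)/(q^{s+1}-q)) · d_s(C), then U is an s-minimal subcode of C. -/
open Module

variable {F : Type*} [Field F] [Fintype F]

lemma csupp_mono {ι : Type*} {P Q : Submodule F (ι → F)} (h : P ≤ Q) : csupp P ⊆ csupp Q :=
  fun _ ⟨x, hx, hj⟩ => ⟨x, h hx, hj⟩

lemma key_count {n s q : ℕ} (hq : Fintype.card F = q)
    (C W : Submodule F (Fin n → F)) (hWC : W ≤ C) (hdim : Module.finrank F ↥W = s + 1) :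
    (q ^ (s + 1) - 1) * dGHW C s ≤ (q ^ (s + 1) - q) * wt W := by
  classical
  letI : Fintype ↥W := Fintype.ofFinite _
  haveI : Finite (Module.Dual F ↥W) := Module.finite_of_finite F
  letI : Fintype (Module.Dual F ↥W) := Fintype.ofFinite _
  have hq1 : 1 < q := hq ▸ Fintype.one_lt_card
  have hqpow : q ≤ q ^ (s + 1) := Nat.le_self_pow (Nat.succ_ne_zero s) q
  set ev : Fin n → Module.Dual F ↥W := fun j => (LinearMap.proj j).comp W.subtype with hev
  set H : Module.Dual F ↥W → Submodule F (Fin n → F) :=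
    fun φ => (LinearMap.ker φ).map W.subtype with hH
  have hHW : ∀ φ, H φ ≤ W := fun φ => Submodule.map_subtype_le _ _
  have hHrank : ∀ φ : Module.Dual F ↥W, φ ≠ 0 → Module.finrank F ↥(H φ) = s := by
    intro φ hφ
    have h1 : Module.finrank F ↥(LinearMap.ker φ) + 1 = s + 1 := by
      rw [← hdim]; exact Module.Dual.finrank_ker_add_one_of_ne_zero hφ
    rw [hH, Submodule.finrank_map_subtype_eq]
    omega
  have hsupp_iff : ∀ (φ : Module.Dual F ↥W) (j : Fin n),
      j ∉ csupp (H φ) ↔ LinearMap.ker φ ≤ LinearMap.ker (ev j) := by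
    intro φ j
    constructor
    · intro hj w hw
      simp only [LinearMap.mem_ker, hev, LinearMap.comp_apply, LinearMap.proj_apply,
        Submodule.coe_subtype]
      by_contra hne
      exact hj ⟨(w : Fin n → F), ⟨w, hw, rfl⟩, hne⟩
    · rintro hle ⟨x, ⟨w, hw, rfl⟩, hne⟩
      exact hne (hle hw)
  -- cardinality of the dual
  have hcard_dual : Fintype.card (Module.Dual F ↥W) = q ^ (s + 1) := by
    rw [card_eq_pow_finrank (K := F), hq, Subspace.dual_finrank_eq, hdim]
  set A : Finset (Module.Dual F ↥W) := Finset.univ.erase 0 with hA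
  have hAcard : A.card = q ^ (s + 1) - 1 := by
    rw [hA, Finset.card_erase_of_mem (Finset.mem_univ _), Finset.card_univ, hcard_dual]
  -- per-coordinate counts
  have hcount : ∀ j : Fin n, j ∈ csupp W →
      (A.filter (fun φ => j ∈ csupp (H φ))).card = q ^ (s + 1) - q := by
    intro j hj
    have hev0 : ev j ≠ 0 := by
      obtain ⟨x, hx, hxj⟩ := hj
      intro h0
      apply hxj
      have := LinearMap.congr_fun h0 ⟨x, hx⟩
      simpa [hev] using this
    have hkerrank : Module.finrank F ↥(LinearMap.ker (ev j)) = s := by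
      have := Module.Dual.finrank_ker_add_one_of_ne_zero hev0
      rw [hdim] at this; omega
    have hmem_iff : ∀ φ ∈ A, (j ∈ csupp (H φ) ↔ φ ∉ Submodule.span F {ev j}) := by
      intro φ hφA
      have hφ0 : φ ≠ 0 := (Finset.mem_erase.mp hφA).1
      rw [← not_iff_not, not_not, hsupp_iff]
      constructor
      · intro hle
        have heq : LinearMap.ker φ = LinearMap.ker (ev j) := by
          apply Submodule.eq_of_le_of_finrank_le hle
          rw [hkerrank]
          have := Module.Dual.finrank_ker_add_one_of_ne_zero hφ0
          rw [hdim] at this; omega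
        have hle' : ⨅ (_ : Unit), LinearMap.ker (ev j) ≤ LinearMap.ker φ := by
          rw [iInf_const, heq]
        have := mem_span_of_iInf_ker_le_ker (L := fun _ : Unit => ev j) hle'
        simpa using this
      · intro hmem
        obtain ⟨c, rfl⟩ := Submodule.mem_span_singleton.mp hmem
        have hc : c ≠ 0 := by rintro rfl; simp at hφ0
        rw [LinearMap.ker_smul _ _ hc]
    rw [Finset.filter_congr hmem_iff, Finset.filter_not, Finset.card_sdiff_of_subset (Finset.filter_subset _ _),
      hAcard]
    have : (A.filter (fun φ => φ ∈ Submodule.span F {ev j})).card = q - 1 := by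
      have h1 : A.filter (fun φ => φ ∈ Submodule.span F {ev j}) =
          (Finset.univ.filter (fun φ => φ ∈ Submodule.span F {ev j})).erase 0 := by
        rw [hA, Finset.filter_erase]
      rw [h1, Finset.card_erase_of_mem]
      · have h2 : (Finset.univ.filter (fun φ => φ ∈ Submodule.span F {ev j})).card =
            Fintype.card ↥(Submodule.span F {ev j}) := (Fintype.card_subtype _).symm
        rw [h2, card_eq_pow_finrank (K := F), hq, finrank_span_singleton hev0, pow_one]
      · exact Finset.mem_filter.mpr ⟨Finset.mem_univ _, Submodule.zero_mem _⟩
    rw [this]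
    omega
  have hcount0 : ∀ j : Fin n, j ∉ csupp W →
      (A.filter (fun φ => j ∈ csupp (H φ))).card = 0 := by
    intro j hj
    rw [Finset.card_eq_zero, Finset.filter_eq_empty_iff]
    intro φ _ hmem
    exact hj (csupp_mono (hHW φ) hmem)
  -- wt as filter card
  have hwt : ∀ P : Submodule F (Fin n → F), wt P = (Finset.univ.filter (· ∈ csupp P)).card := by
    intro P
    rw [wt, Set.ncard_eq_toFinset_card']
    congr 1
    ext j
    simp [Set.mem_toFinset]
  -- double counting
  have hsum : ∑ φ ∈ A, wt (H φ) = wt W * (q ^ (s + 1) - q) := by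
    calc ∑ φ ∈ A, wt (H φ)
        = ∑ φ ∈ A, ∑ j : Fin n, (if j ∈ csupp (H φ) then 1 else 0) := by
          refine Finset.sum_congr rfl fun φ _ => ?_
          rw [hwt, Finset.card_filter]
      _ = ∑ j : Fin n, ∑ φ ∈ A, (if j ∈ csupp (H φ) then 1 else 0) := Finset.sum_comm
      _ = ∑ j : Fin n, (A.filter (fun φ => j ∈ csupp (H φ))).card := by
          refine Finset.sum_congr rfl fun j _ => ?_
          rw [Finset.card_filter]
      _ = ∑ j ∈ Finset.univ.filter (· ∈ csupp W), (q ^ (s + 1) - q) := by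
          rw [← Finset.sum_filter_add_sum_filter_not Finset.univ (· ∈ csupp W)]
          have h2 : ∑ j ∈ Finset.univ.filter (¬ · ∈ csupp W),
              (A.filter (fun φ => j ∈ csupp (H φ))).card = 0 := by
            refine Finset.sum_eq_zero fun j hj => hcount0 j (Finset.mem_filter.mp hj).2
          rw [h2, add_zero]
          refine Finset.sum_congr rfl fun j hj => hcount j (Finset.mem_filter.mp hj).2
      _ = wt W * (q ^ (s + 1) - q) := by
          rw [Finset.sum_const, hwt, smul_eq_mul]
  -- lower bound
  have hlow : A.card * dGHW C s ≤ ∑ φ ∈ A, wt (H φ) := by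
    rw [Finset.card_eq_sum_ones, Finset.sum_mul, one_mul]
    refine Finset.sum_le_sum fun φ hφ => ?_
    exact Nat.sInf_le ⟨H φ, le_trans (hHW φ) hWC, hHrank φ (Finset.mem_erase.mp hφ).1, rfl⟩
  rw [hAcard] at hlow
  rw [hsum] at hlow
  exact hlow.trans_eq (mul_comm _ _)

/-- an `s`-dimensional subcode of support weight less than
`((q^{s+1}-1)/(q^{s+1}-q)) d_s(C)` is an `s`-minimal subcode. -/
theorem isMinimalSubcode_of_wt_lt_ratio (n k s q : ℕ) (hq : Fintype.card F = q)
    (hs1 : 1 ≤ s) (hs2 : s ≤ k - 1)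
    (C : Submodule F (Fin n → F)) (hC : Module.finrank F C = k)
    (U : Submodule F (Fin n → F)) (hU : U ≤ C) (hUs : Module.finrank F U = s)
    (hw : (wt U : ℝ) < ((q ^ (s + 1) - 1 : ℝ) / (q ^ (s + 1) - q : ℝ)) * dGHW C s) :
    IsMinimalSubcode C U s := by
  classical
  refine ⟨hU, hUs, ?_⟩
  intro V hVC hVs hsupp
  by_contra hne
  have hq1 : 1 < q := hq ▸ Fintype.one_lt_card
  -- U < U ⊔ V
  have hlt : U < U ⊔ V := by
    rcases lt_or_eq_of_le (le_sup_left : U ≤ U ⊔ V) with h | h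
    · exact h
    · exfalso
      have hVU : V ≤ U := by rw [h]; exact le_sup_right
      exact hne (Submodule.eq_of_le_of_finrank_le hVU (by rw [hUs, hVs]))
  have hrk : s + 1 ≤ Module.finrank F ↥(U ⊔ V) := by
    have := Submodule.finrank_lt_finrank_of_lt hlt
    omega
  -- pick an (s+1)-dimensional subspace W of U ⊔ V
  obtain ⟨f, hf⟩ := exists_linearIndependent_of_le_finrank (R := F) (M := ↥(U ⊔ V)) hrk
  set W : Submodule F (Fin n → F) :=
    (Submodule.span F (Set.range f)).map (U ⊔ V).subtype with hW
  have hWle : W ≤ U ⊔ V := Submodule.map_subtype_le _ _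
  have hWrank : Module.finrank F ↥W = s + 1 := by
    rw [hW, Submodule.finrank_map_subtype_eq, finrank_span_eq_card hf, Fintype.card_fin]
  have hWC : W ≤ C := hWle.trans (sup_le hU hVC)
  -- support of W inside support of U
  have hsuppW : csupp W ⊆ csupp U := by
    intro j hj
    have hj2 : j ∈ csupp (U ⊔ V) := csupp_mono hWle hj
    obtain ⟨x, hx, hxj⟩ := hj2
    obtain ⟨u, hu, v, hv, rfl⟩ := Submodule.mem_sup.mp hx
    by_cases hu0 : u j = 0
    · have hv0 : v j ≠ 0 := by intro h; apply hxj; simp [hu0, h]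
      exact hsupp ⟨v, hv, hv0⟩
    · exact ⟨u, hu, hu0⟩
  have hwtW : wt W ≤ wt U := Set.ncard_le_ncard hsuppW (Set.toFinite _)
  -- the counting bound
  have hkey := key_count hq C W hWC hWrank
  have hkey2 : (q ^ (s + 1) - 1) * dGHW C s ≤ (q ^ (s + 1) - q) * wt U :=
    hkey.trans (Nat.mul_le_mul_left _ hwtW)
  -- real arithmetic contradiction
  have hq1R : (1 : ℝ) < q := by exact_mod_cast hq1
  have hqpowR : (q : ℝ) < (q : ℝ) ^ (s + 1) := by
    calc (q : ℝ) = (q : ℝ) ^ 1 := (pow_one _).symm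
    _ < (q : ℝ) ^ (s + 1) := by
        apply pow_lt_pow_right₀ hq1R
        omega
  have hbpos : (0 : ℝ) < (q : ℝ) ^ (s + 1) - q := by linarith
  have hwR : (wt U : ℝ) * ((q : ℝ) ^ (s + 1) - q) <
      ((q : ℝ) ^ (s + 1) - 1) * dGHW C s := by
    rw [div_mul_eq_mul_div, lt_div_iff₀ hbpos] at hw
    exact hw
  have hkeyR : ((q : ℝ) ^ (s + 1) - 1) * dGHW C s ≤
      ((q : ℝ) ^ (s + 1) - q) * wt U := by
    have h1 : (1 : ℕ) ≤ q ^ (s + 1) := Nat.one_le_pow _ _ (by omega)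
    have h2 : q ≤ q ^ (s + 1) := Nat.le_self_pow (Nat.succ_ne_zero s) q
    have := (Nat.cast_le (α := ℝ)).mpr hkey2
    push_cast [Nat.cast_sub h1, Nat.cast_sub h2] at this
    convert this using 2 <;> push_cast <;> ring
  linarith
end

section
/- Let C be an [n,k]_q linear code with projection C̃ (the code obtained by puncturing from C, for each equivalence class of proportional generator-matrix columns, all but one representative). Then for 1 ≤ s ≤ k-1, C is an s-minimal code if and only if C̃ is an s-minimal code. -/
open Module

variable {F : Type*} [Field F] [Fintype F]

/-- a code `C` (row space of `G`, all columns nonzero) is `s`-minimal iff its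
projection `C̃` (row space of `G'`, obtained from `G` by keeping exactly one representative of
each class of proportional columns) is `s`-minimal. -/
theorem sMinimal_iff_projection_sMinimal (n m k s : ℕ) (hs1 : 1 ≤ s) (hs2 : s ≤ k - 1)
    (G : Matrix (Fin k) (Fin n) F) (hG : G.rank = k)
    (hGnz : ∀ i : Fin n, (fun r => G r i) ≠ 0)
    (ι : Fin m ↪ Fin n) (G' : Matrix (Fin k) (Fin m) F)
    (hsub : ∀ j : Fin m, (fun r => G' r j) = fun r => G r (ι j))
    (hcover : ∀ i : Fin n, ∃ j : Fin m, ∃ α : Fˣ,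
      (fun r => G r i) = (α : F) • fun r => G r (ι j))
    (hdistinct : ∀ j j' : Fin m, j ≠ j' → ∀ α : F,
      (fun r => G' r j) ≠ α • fun r => G' r j') :
    SMinimal (LinearMap.range (Matrix.vecMulLinear G)) s ↔
      SMinimal (LinearMap.range (Matrix.vecMulLinear G')) s := by
  classical
  set C := LinearMap.range (Matrix.vecMulLinear G) with hC
  set Ct := LinearMap.range (Matrix.vecMulLinear G') with hCt
  set P : (Fin n → F) →ₗ[F] (Fin m → F) := LinearMap.funLeft F F ι with hP
  -- column relation for elements of C
  have hrel : ∀ i : Fin n, ∃ (j : Fin m) (α : Fˣ), ∀ x ∈ C, x i = (α : F) * x (ι j) := by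
    intro i
    obtain ⟨j, α, hcol⟩ := hcover i
    refine ⟨j, α, ?_⟩
    rintro x ⟨v, rfl⟩
    have h : ∀ r, G r i = (α : F) * G r (ι j) := fun r => by
      have := congrFun hcol r; simpa using this
    simp [Matrix.vecMulLinear_apply, Matrix.vecMul, dotProduct, h, Finset.mul_sum,
      mul_left_comm]
  have hcomp : P ∘ₗ Matrix.vecMulLinear G = Matrix.vecMulLinear G' := by
    apply LinearMap.ext; intro v
    funext j
    have h := fun r => congrFun (hsub j) r
    simp only [LinearMap.comp_apply, hP, LinearMap.funLeft_apply,
      Matrix.vecMulLinear_apply, Matrix.vecMul, dotProduct, Function.comp]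
    exact Finset.sum_congr rfl fun r _ => by simp [h r]
  have hmapC : Submodule.map P C = Ct := by
    rw [hC, ← LinearMap.range_comp, hcomp, hCt]
  have hinjC : ∀ x ∈ C, ∀ y ∈ C, P x = P y → x = y := by
    intro x hx y hy h
    have h0 : P (x - y) = 0 := by rw [map_sub, h, sub_self]
    have : x - y = 0 := by
      funext i
      obtain ⟨j, α, hj⟩ := hrel i
      have hxy : (x - y) (ι j) = 0 := congrFun h0 j
      have := hj (x - y) (sub_mem hx hy)
      simp [this, hxy]
    exact sub_eq_zero.mp this
  have hcsuppP : ∀ (U : Submodule F (Fin n → F)) (j : Fin m),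
      j ∈ csupp (Submodule.map P U) ↔ ι j ∈ csupp U := by
    intro U j
    constructor
    · rintro ⟨y, hy, hyj⟩
      obtain ⟨x, hx, rfl⟩ := Submodule.mem_map.mp hy
      exact ⟨x, hx, hyj⟩
    · rintro ⟨x, hx, hxi⟩
      exact ⟨P x, Submodule.mem_map_of_mem hx, hxi⟩
  have hsupp_iff : ∀ U V : Submodule F (Fin n → F), U ≤ C → V ≤ C →
      (csupp V ⊆ csupp U ↔ csupp (Submodule.map P V) ⊆ csupp (Submodule.map P U)) := by
    intro U V hU hV
    constructor
    · intro h j hj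
      rw [hcsuppP] at hj ⊢
      exact h hj
    · intro h i hi
      obtain ⟨x, hx, hxi⟩ := hi
      obtain ⟨j, α, hj⟩ := hrel i
      have hxj : x (ι j) ≠ 0 := by
        intro h0
        exact hxi (by rw [hj x (hV hx), h0, mul_zero])
      have : j ∈ csupp (Submodule.map P V) := (hcsuppP V j).mpr ⟨x, hx, hxj⟩
      obtain ⟨y, hy, hyj⟩ := (hcsuppP U j).mp (h this)
      refine ⟨y, hy, ?_⟩
      rw [hj y (hU hy)]
      exact mul_ne_zero (Units.ne_zero α) hyj
  have hfr : ∀ U : Submodule F (Fin n → F), U ≤ C →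
      finrank F (Submodule.map P U) = finrank F U := by
    intro U hU
    have hinj' : Function.Injective (P ∘ₗ U.subtype) := by
      intro a b hab
      exact Subtype.ext (hinjC a (hU a.2) b (hU b.2) hab)
    have hrg : Submodule.map P U = LinearMap.range (P ∘ₗ U.subtype) := by
      rw [LinearMap.range_comp, Submodule.range_subtype]
    rw [hrg, LinearMap.finrank_range_of_inj hinj']
  have hsurj : ∀ U' : Submodule F (Fin m → F), U' ≤ Ct →
      ∃ U : Submodule F (Fin n → F), U ≤ C ∧ Submodule.map P U = U' := by
    intro U' hU'
    refine ⟨Submodule.comap P U' ⊓ C, inf_le_right, ?_⟩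
    apply le_antisymm
    · rintro y hy
      obtain ⟨x, hx, rfl⟩ := Submodule.mem_map.mp hy
      exact hx.1
    · intro y hy
      have hyc : y ∈ Submodule.map P C := by rw [hmapC]; exact hU' hy
      obtain ⟨x, hx, rfl⟩ := Submodule.mem_map.mp hyc
      exact Submodule.mem_map_of_mem ⟨hy, hx⟩
  have hle : ∀ U V : Submodule F (Fin n → F), U ≤ C → V ≤ C →
      Submodule.map P U ≤ Submodule.map P V → U ≤ V := by
    intro U V hU hV h x hx
    have : P x ∈ Submodule.map P V := h (Submodule.mem_map_of_mem hx)
    obtain ⟨y, hy, hyx⟩ := Submodule.mem_map.mp this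
    have := hinjC y (hV hy) x (hU hx) hyx
    rwa [← this]
  constructor
  · intro hmin U' hU' hfrU'
    obtain ⟨U, hUC, hUm⟩ := hsurj U' hU'
    refine ⟨hU', hfrU', ?_⟩
    intro V' hV' hfrV' hsuppV'
    obtain ⟨V, hVC, hVm⟩ := hsurj V' hV'
    have hfrU : finrank F U = s := by rw [← hfr U hUC, hUm]; exact hfrU'
    have hfrV : finrank F V = s := by rw [← hfr V hVC, hVm]; exact hfrV'
    have hsupp : csupp V ⊆ csupp U := by
      rw [hsupp_iff U V hUC hVC, hUm, hVm]; exact hsuppV'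
    have := (hmin U hUC hfrU).2.2 V hVC hfrV hsupp
    rw [← hUm, ← hVm, this]
  · intro hmin U hUC hfrU
    refine ⟨hUC, hfrU, ?_⟩
    intro V hVC hfrV hsupp
    have h1 : Submodule.map P U ≤ Ct := by rw [← hmapC]; exact Submodule.map_mono hUC
    have h2 : Submodule.map P V ≤ Ct := by rw [← hmapC]; exact Submodule.map_mono hVC
    have hf1 : finrank F (Submodule.map P U) = s := by rw [hfr U hUC]; exact hfrU
    have hf2 : finrank F (Submodule.map P V) = s := by rw [hfr V hVC]; exact hfrV
    have heq := (hmin (Submodule.map P U) h1 hf1).2.2 (Submodule.map P V) h2 hf2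
      ((hsupp_iff U V hUC hVC).mp hsupp)
    exact le_antisymm (hle V U hVC hUC heq.le) (hle U V hUC hVC heq.ge)
end

section
/- Let m(k,s,q) denote the minimal length n such that there exists an s-minimal [n,k]_q linear code. Then m(k,s,q) ≥ (k-s)(q^k - 1)/(q^{k-s} - 1), and if k - s ≤ q, then m(k,s,q) ≥ (k-s)(q^{s+1}-1)/(q-1). -/
open Module

variable {F : Type*} [Field F] [Fintype F]

/-- The minimal length `n` of an `s`-minimal `[n,k]_q` linear code over `F`. -/
noncomputable def minSMinimalLength (F : Type*) [Field F] [Fintype F] (k s : ℕ) : ℕ :=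
  sInf {n | ∃ C : Submodule F (Fin n → F), Module.finrank F C = k ∧ SMinimal C s}

section AuxHelpers

open Matrix

set_option linter.unusedSectionVars false
set_option maxHeartbeats 1000000
set_option synthInstance.maxHeartbeats 400000

section Helpers

variable {M : Type*} [AddCommGroup M] [Module F M] [FiniteDimensional F M]

lemma aux_functional_ker (f : M →ₗ[F] F) (hf : f ≠ 0) :
    finrank F (LinearMap.ker f) + 1 = finrank F M := by
  obtain ⟨x, hx⟩ : ∃ x, f x ≠ 0 := by
    by_contra h; push_neg at h; exact hf (by ext x; simp [h x])
  have hsurj : Function.Surjective f := fun a =>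
    ⟨(a * (f x)⁻¹) • x, by simp [hx]⟩
  have hr : LinearMap.range f = ⊤ := LinearMap.range_eq_top.mpr hsurj
  have := LinearMap.finrank_range_add_finrank_ker f
  rw [hr, finrank_top, Module.finrank_self] at this
  omega

lemma aux_functional_prop (f g : M →ₗ[F] F) (hf : f ≠ 0) (hg : g ≠ 0)
    (h : LinearMap.ker f ≤ LinearMap.ker g) : ∃ c : F, c ≠ 0 ∧ f = c • g := by
  have hker : LinearMap.ker f = LinearMap.ker g := by
    apply Submodule.eq_of_le_of_finrank_le h
    have h1 := aux_functional_ker f hf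
    have h2 := aux_functional_ker g hg
    omega
  obtain ⟨x₀, hx₀⟩ : ∃ x, g x ≠ 0 := by
    by_contra hcon; push_neg at hcon; exact hg (by ext x; simp [hcon x])
  refine ⟨f x₀ / g x₀, ?_, ?_⟩
  · have hfx₀ : f x₀ ≠ 0 := by
      intro hz
      have : x₀ ∈ LinearMap.ker g := hker ▸ LinearMap.mem_ker.mpr hz
      exact hx₀ this
    exact div_ne_zero hfx₀ hx₀
  · ext x
    have hy : g (x - (g x / g x₀) • x₀) = 0 := by
      simp [mul_comm]
      field_simp
      simp
    have hy' : f (x - (g x / g x₀) • x₀) = 0 := by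
      have : x - (g x / g x₀) • x₀ ∈ LinearMap.ker g := LinearMap.mem_ker.mpr hy
      rw [← hker] at this
      exact this
    simp only [map_sub, _root_.map_smul, sub_eq_zero, smul_eq_mul] at hy'
    simp only [LinearMap.smul_apply, smul_eq_mul]
    rw [hy']
    field_simp

end Helpers

lemma aux_star (q k s : ℕ) (hq : 1 ≤ q) (h : s + 1 ≤ k) :
    (q ^ k - q ^ s) * (q ^ (k - s - 1) - 1) = (q ^ (k - s) - 1) * (q ^ (k - 1) - q ^ s) := by
  obtain ⟨a, rfl⟩ : ∃ a, k = s + 1 + a := ⟨k - s - 1, by omega⟩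
  have e1 : s + 1 + a - s - 1 = a := by omega
  have e2 : s + 1 + a - s = a + 1 := by omega
  have e3 : s + 1 + a - 1 = s + a := by omega
  rw [e1, e2, e3]
  have h1 : q ^ s ≤ q ^ (s + 1 + a) := Nat.pow_le_pow_right hq (by omega)
  have h2 : 1 ≤ q ^ a := Nat.one_le_pow _ _ hq
  have h3 : 1 ≤ q ^ (a + 1) := Nat.one_le_pow _ _ hq
  have h4 : q ^ s ≤ q ^ (s + a) := Nat.pow_le_pow_right hq (by omega)
  zify [h1, h2, h3, h4]
  ring

lemma aux_telescope (q k : ℕ) (hq : 1 ≤ q) :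
    ∀ s, s ≤ k → (∏ i : Fin s, (q ^ k - q ^ (i : ℕ))) * (q ^ (k - s) - 1) =
      (q ^ k - 1) * ∏ i : Fin s, (q ^ (k - 1) - q ^ (i : ℕ)) := by
  intro s
  induction s with
  | zero => simp
  | succ s ih =>
    intro hsk
    have hs := ih (by omega)
    rw [Fin.prod_univ_castSucc, Fin.prod_univ_castSucc]
    simp only [Fin.coe_castSucc, Fin.val_last]
    have : k - (s + 1) = k - s - 1 := by omega
    rw [this]
    calc (∏ i : Fin s, (q ^ k - q ^ (i : ℕ))) * (q ^ k - q ^ s) * (q ^ (k - s - 1) - 1)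
        = (∏ i : Fin s, (q ^ k - q ^ (i : ℕ))) * ((q ^ k - q ^ s) * (q ^ (k - s - 1) - 1)) := by
          ring
      _ = (∏ i : Fin s, (q ^ k - q ^ (i : ℕ))) * ((q ^ (k - s) - 1) * (q ^ (k - 1) - q ^ s)) := by
          rw [aux_star q k s hq hsk]
      _ = ((∏ i : Fin s, (q ^ k - q ^ (i : ℕ))) * (q ^ (k - s) - 1)) * (q ^ (k - 1) - q ^ s) := by
          ring
      _ = ((q ^ k - 1) * ∏ i : Fin s, (q ^ (k - 1) - q ^ (i : ℕ))) * (q ^ (k - 1) - q ^ s) := by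
          rw [hs]
      _ = (q ^ k - 1) * ((∏ i : Fin s, (q ^ (k - 1) - q ^ (i : ℕ))) * (q ^ (k - 1) - q ^ s)) := by
          ring

lemma aux_not_mem_csupp {ι : Type*} {U : Submodule F (ι → F)} {j : ι} (h : j ∉ csupp U)
    {x : ι → F} (hx : x ∈ U) : x j = 0 := by
  by_contra hne
  exact h ⟨x, hx, hne⟩

/-- The cutting lemma. -/
lemma aux_cutting {n : ℕ} {C : Submodule F (Fin n → F)} {s : ℕ} (hmin : SMinimal C s)
    (hs : 1 ≤ s) {U : Submodule F (Fin n → F)} (hUC : U ≤ C) (hUs : finrank F U = s)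
    {c : Fin n → F} (hc : c ∈ C) (hsupp : ∀ j, j ∉ csupp U → c j = 0) : c ∈ U := by
  by_contra hcU
  have hc0 : c ≠ 0 := fun h => hcU (h ▸ U.zero_mem)
  haveI : FiniteDimensional F U := FiniteDimensional.finiteDimensional_submodule U
  -- a hyperplane U₀ of U
  let b : Basis (Fin s) F U := Module.finBasisOfFinrankEq F U hUs
  let v : Fin (s - 1) → U := fun i => b (Fin.castLE (by omega) i)
  have hvli : LinearIndependent F v :=
    b.linearIndependent.comp _ (Fin.castLE_injective _)
  let U₀ : Submodule F (Fin n → F) := Submodule.map U.subtype (Submodule.span F (Set.range v))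
  have hU₀U : U₀ ≤ U := Submodule.map_subtype_le _ _
  have hU₀rank : finrank F U₀ = s - 1 := by
    rw [Submodule.finrank_map_subtype_eq]
    rw [finrank_span_eq_card hvli]
    simp
  -- V := U₀ ⊔ span {c}
  let V : Submodule F (Fin n → F) := U₀ ⊔ Submodule.span F {c}
  have hcV : c ∈ V := Submodule.mem_sup_right (Submodule.mem_span_singleton_self c)
  have hVC : V ≤ C := sup_le (le_trans hU₀U hUC) ((Submodule.span_singleton_le_iff_mem c C).mpr hc)
  have hdisj : U₀ ⊓ Submodule.span F {c} = ⊥ := by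
    rw [eq_bot_iff]
    rintro x ⟨hx1, hx2⟩
    obtain ⟨a, rfl⟩ := Submodule.mem_span_singleton.mp hx2
    rcases eq_or_ne a 0 with rfl | ha
    · simp
    · exfalso
      apply hcU
      have : a⁻¹ • (a • c) ∈ U := U.smul_mem a⁻¹ (hU₀U hx1)
      simpa [smul_smul, inv_mul_cancel₀ ha] using this
  have hVrank : finrank F V = s := by
    show finrank F ↥(U₀ ⊔ Submodule.span F {c}) = s
    have h1 : finrank F (Submodule.span F ({c} : Set (Fin n → F))) = 1 :=
      finrank_span_singleton hc0
    have := Submodule.finrank_sup_add_finrank_inf_eq U₀ (Submodule.span F {c})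
    rw [hdisj, hU₀rank, h1] at this
    simp only [finrank_bot] at this
    omega
  have hVsupp : csupp V ⊆ csupp U := by
    rintro j ⟨x, hxV, hxj⟩
    by_contra hjU
    apply hxj
    obtain ⟨y, hy, z, hz, rfl⟩ := Submodule.mem_sup.mp hxV
    obtain ⟨a, rfl⟩ := Submodule.mem_span_singleton.mp hz
    have hyj : y j = 0 := aux_not_mem_csupp hjU (hU₀U hy)
    have hcj : c j = 0 := hsupp j hjU
    simp [hyj, hcj]
  have := (hmin U hUC hUs).2.2 V hVC hVrank hVsupp
  exact hcU (this ▸ hcV)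


/-- Blocking lemma: for an s-minimal code of dimension k, every s-dimensional subcode misses
at least k - s support coordinates of C. -/
lemma aux_blocking_s16 {n : ℕ} {C : Submodule F (Fin n → F)} {k s : ℕ} (hmin : SMinimal C s)
    (hs : 1 ≤ s) (hk : finrank F C = k)
    {W : Submodule F (Fin n → F)} (hWC : W ≤ C) (hWs : finrank F W = s) :
    k - s ≤ (csupp C \ csupp W).ncard := by
  classical
  haveI : FiniteDimensional F C := FiniteDimensional.finiteDimensional_submodule C
  let D : Set (Fin n) := csupp C \ csupp W
  let ρ : C →ₗ[F] (D → F) :=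
    (LinearMap.funLeft F F (fun j : D => (j : Fin n))).comp C.subtype
  have hker : LinearMap.ker ρ = Submodule.comap C.subtype W := by
    ext c
    simp only [LinearMap.mem_ker, Submodule.mem_comap, Submodule.coe_subtype]
    constructor
    · intro h
      apply aux_cutting hmin hs hWC hWs c.2
      intro j hj
      by_cases hjC : j ∈ csupp C
      · have : (⟨j, hjC, hj⟩ : D) ∈ Set.univ := Set.mem_univ _
        have := congrFun h (⟨j, hjC, hj⟩ : D)
        simpa [ρ, LinearMap.funLeft] using this
      · exact aux_not_mem_csupp hjC c.2
    · intro h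
      ext j
      have : (c : Fin n → F) (j : Fin n) = 0 := aux_not_mem_csupp j.2.2 h
      simpa [ρ, LinearMap.funLeft] using this
  have hkerrank : finrank F (LinearMap.ker ρ) = s := by
    rw [hker]
    rw [(Submodule.comapSubtypeEquivOfLe hWC).finrank_eq]
    exact hWs
  have hrn := LinearMap.finrank_range_add_finrank_ker ρ
  rw [hkerrank, hk] at hrn
  have hD : D.Finite := Set.toFinite D
  haveI : Fintype D := hD.fintype
  have hle : finrank F (LinearMap.range ρ) ≤ (csupp C \ csupp W).ncard := by
    have h1 : finrank F (LinearMap.range ρ) ≤ finrank F (D → F) := Submodule.finrank_le _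
    rwa [Module.finrank_pi, ← Nat.card_eq_fintype_card, Nat.card_coe_set_eq] at h1
  omega

/-- The key induction for the second bound. -/
lemma aux_L {n : ℕ} {C : Submodule F (Fin n → F)} {q : ℕ} (hq : Fintype.card F = q) :
    ∀ d t r, r + d = finrank F C → t ≤ q →
    (∀ W : Submodule F (Fin n → F), W ≤ C → finrank F W = r →
      t ≤ (csupp C \ csupp W).ncard) →
    t * (q ^ (r + 1) - 1) ≤ (csupp C).ncard * (q - 1) := by
  have hq2 : 2 ≤ q := hq ▸ Fintype.one_lt_card
  intro d
  induction d with
  | zero =>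
    intro t r hr ht hblk
    have ht0 : t = 0 := by
      by_contra ht0
      have := hblk C le_rfl (by omega)
      rw [Set.diff_self, Set.ncard_empty] at this
      omega
    simp [ht0]
  | succ d ih =>
    intro t r hr ht hblk
    classical
    by_cases hA : ∃ W' : Submodule F (Fin n → F), W' ≤ C ∧ finrank F W' = r + 1 ∧
        csupp C ⊆ csupp W'
    · obtain ⟨W', hW'C, hW'r, hsub⟩ := hA
      haveI : FiniteDimensional F W' := FiniteDimensional.finiteDimensional_submodule W'
      haveI : Finite (↥W' →ₗ[F] F) :=
        Finite.of_injective (fun f : ↥W' →ₗ[F] F => (f : ↥W' → F)) LinearMap.coe_injective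
      letI : Fintype (↥W' →ₗ[F] F) := Fintype.ofFinite _
      set A : Finset ((↥W' →ₗ[F] F) × Fin n) := Finset.univ.filter
        (fun p => p.1 ≠ 0 ∧ p.2 ∈ csupp C ∧
          ∀ x : ↥W', p.1 x = 0 → (x : Fin n → F) p.2 = 0) with hA_def
      have hcardDual : Fintype.card (↥W' →ₗ[F] F) = q ^ (r + 1) := by
        have h1 : finrank F (↥W' →ₗ[F] F) = r + 1 :=
          hW'r ▸ (Subspace.dual_finrank_eq (V := ↥W'))
        rw [← hq, card_eq_pow_finrank (K := F) (V := ↥W' →ₗ[F] F), h1]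
      -- lower bound
      have hlow : t * (q ^ (r + 1) - 1) ≤ A.card := by
        have hfib := Finset.card_eq_sum_card_fiberwise
          (f := Prod.fst) (s := A) (t := Finset.univ.filter (fun f : ↥W' →ₗ[F] F => f ≠ 0))
          (by
            intro p hp
            simp only [hA_def, Finset.mem_coe, Finset.mem_filter, Finset.mem_univ, true_and] at hp ⊢
            exact hp.1)
        rw [hfib]
        have hcardne : (Finset.univ.filter (fun f : ↥W' →ₗ[F] F => f ≠ 0)).card
            = q ^ (r + 1) - 1 := by
          rw [Finset.filter_ne', Finset.card_erase_of_mem (Finset.mem_univ _),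
            Finset.card_univ, hcardDual]
        calc t * (q ^ (r + 1) - 1)
            = (Finset.univ.filter (fun f : ↥W' →ₗ[F] F => f ≠ 0)).card • t := by
              rw [hcardne, smul_eq_mul, mul_comm]
          _ ≤ ∑ f ∈ Finset.univ.filter (fun f : ↥W' →ₗ[F] F => f ≠ 0),
              (A.filter (fun p => p.1 = f)).card := by
              apply Finset.card_nsmul_le_sum
              intro f hf
              simp only [Finset.mem_filter, Finset.mem_univ, true_and] at hf
              -- t ≤ fiber card
              set Wf : Submodule F (Fin n → F) :=
                Submodule.map W'.subtype (LinearMap.ker f) with hWf_def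
              have hWfC : Wf ≤ C := le_trans (Submodule.map_subtype_le _ _) hW'C
              have hWfr : finrank F Wf = r := by
                rw [hWf_def, Submodule.finrank_map_subtype_eq]
                have := aux_functional_ker f hf
                rw [hW'r] at this
                omega
              have hblkf := hblk Wf hWfC hWfr
              have hfin : (csupp C \ csupp Wf).Finite := Set.toFinite _
              rw [Set.ncard_eq_toFinset_card' (csupp C \ csupp Wf)] at hblkf
              refine le_trans hblkf (Finset.card_le_card_of_injOn (fun j => (f, j)) ?_ ?_)
              · intro j hj
                rw [Finset.mem_coe, Set.mem_toFinset] at hj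
                refine Finset.mem_filter.mpr ⟨Finset.mem_filter.mpr
                  ⟨Finset.mem_univ _, hf, hj.1, ?_⟩, rfl⟩
                intro x hx
                exact aux_not_mem_csupp hj.2
                  (Submodule.mem_map_of_mem (LinearMap.mem_ker.mpr hx))
              · intro a _ b _ hab
                simpa using congrArg Prod.snd hab
      -- upper bound
      have hupp : A.card ≤ (csupp C).ncard * (q - 1) := by
        have hfib := Finset.card_eq_sum_card_fiberwise
          (f := Prod.snd) (s := A) (t := Finset.univ) (fun p _ => Finset.mem_univ _)
        rw [hfib]
        have hzero : ∀ j ∈ Finset.univ, j ∉ (csupp C).toFinset →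
            (A.filter (fun p => p.2 = j)).card = 0 := by
          intro j _ hj
          rw [Set.mem_toFinset] at hj
          rw [Finset.card_eq_zero, Finset.filter_eq_empty_iff]
          rintro p hp rfl
          simp only [hA_def, Finset.mem_filter, Finset.mem_univ, true_and] at hp
          exact hj hp.2.1
        rw [← Finset.sum_subset (Finset.subset_univ (csupp C).toFinset) hzero]
        have hbound : ∀ j ∈ (csupp C).toFinset, (A.filter (fun p => p.2 = j)).card ≤ q - 1 := by
          intro j hj
          rw [Set.mem_toFinset] at hj
          set g : ↥W' →ₗ[F] F := (LinearMap.proj j).comp W'.subtype with hg_def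
          have hgne : g ≠ 0 := by
            obtain ⟨x, hxW, hxj⟩ := hsub hj
            intro h0
            have : g ⟨x, hxW⟩ = 0 := by rw [h0]; rfl
            exact hxj (by simpa [hg_def] using this)
          have hsubim : A.filter (fun p => p.2 = j) ⊆
              (Finset.univ.filter (fun c : F => c ≠ 0)).image (fun c => (c • g, j)) := by
            intro p hp
            simp only [hA_def, Finset.mem_filter, Finset.mem_univ, true_and] at hp
            obtain ⟨⟨hp1, hp2, hp3⟩, hpj⟩ := hp
            have hker : LinearMap.ker p.1 ≤ LinearMap.ker g := by
              intro x hx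
              rw [LinearMap.mem_ker] at hx ⊢
              have := hp3 x hx
              rw [hpj] at this
              simpa [hg_def] using this
            obtain ⟨c, hc0, hc⟩ := aux_functional_prop p.1 g hp1 hgne hker
            rw [Finset.mem_image]
            exact ⟨c, by simp [hc0], by rw [← hc, ← hpj]⟩
          calc (A.filter (fun p => p.2 = j)).card
              ≤ ((Finset.univ.filter (fun c : F => c ≠ 0)).image (fun c => (c • g, j))).card :=
                Finset.card_le_card hsubim
            _ ≤ (Finset.univ.filter (fun c : F => c ≠ 0)).card := Finset.card_image_le
            _ = q - 1 := by
                rw [Finset.filter_ne', Finset.card_erase_of_mem (Finset.mem_univ _),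
                  Finset.card_univ, hq]
        calc ∑ j ∈ (csupp C).toFinset, (A.filter (fun p => p.2 = j)).card
            ≤ (csupp C).toFinset.card • (q - 1) := Finset.sum_le_card_nsmul _ _ _ hbound
          _ = (csupp C).ncard * (q - 1) := by
              rw [smul_eq_mul, Set.ncard_eq_toFinset_card']
      exact le_trans hlow hupp
    · -- Case B
      push_neg at hA
      have hblk' : ∀ W' : Submodule F (Fin n → F), W' ≤ C → finrank F W' = r + 1 →
          1 ≤ (csupp C \ csupp W').ncard := by
        intro W' hW'C hW'r
        obtain ⟨j, hjC, hjW⟩ := Set.not_subset.mp (hA W' hW'C hW'r)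
        have : (csupp C \ csupp W').Nonempty := ⟨j, hjC, hjW⟩
        exact (Set.ncard_pos (Set.toFinite _)).mpr this
      have hih := ih 1 (r + 1) (by omega) (by omega) hblk'
      rw [one_mul] at hih
      refine le_trans ?_ hih
      -- t * (q^(r+1) - 1) ≤ q^(r+2) - 1
      obtain ⟨X, hX⟩ : ∃ X, q ^ (r + 1) = X + 1 :=
        ⟨q ^ (r + 1) - 1, by have := Nat.one_le_pow (r+1) q (by omega); omega⟩
      have h1 : t * (q ^ (r + 1) - 1) = t * X := by rw [hX]; simp
      have h2 : q ^ (r + 1 + 1) = q * X + q := by rw [pow_succ, hX]; ring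
      rw [h1, h2]
      calc t * X ≤ q * X := Nat.mul_le_mul_right X ht
        _ ≤ q * X + q - 1 := by omega

lemma aux_li_subtype {n s : ℕ} {P : Submodule F (Fin n → F)} (u : Fin s → ↥P) :
    LinearIndependent F u ↔ LinearIndependent F (fun i => (u i : Fin n → F)) := by
  have heq : (P.subtype ∘ u) = fun i => (u i : Fin n → F) := funext fun i => rfl
  rw [← heq]
  exact (LinearMap.linearIndependent_iff P.subtype (Submodule.ker_subtype _)).symm


/-- Counting linearly independent tuples whose coordinates vanish at `j`. -/
lemma aux_fiber {n s : ℕ} {C : Submodule F (Fin n → F)} [FiniteDimensional F ↥C]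
    {q k : ℕ} (hq : Fintype.card F = q) (hk : finrank F ↥C = k) (hsk : s ≤ k - 1)
    {j : Fin n} (hjC : j ∈ csupp C) :
    Nat.card {w : Fin s → ↥C // LinearIndependent F w ∧ ∀ i, ((w i : Fin n → F)) j = 0}
      = ∏ i : Fin s, (q ^ (k - 1) - q ^ (i : ℕ)) := by
  classical
  set evj : ↥C →ₗ[F] F := (LinearMap.proj j).comp C.subtype with hevj_def
  have hevne : evj ≠ 0 := by
    obtain ⟨x, hxC, hxj⟩ := hjC
    intro h0
    have : evj ⟨x, hxC⟩ = 0 := by rw [h0]; rfl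
    exact hxj (by simpa [hevj_def] using this)
  set Kc : Submodule F (Fin n → F) := Submodule.map C.subtype (LinearMap.ker evj) with hKc_def
  have hKcC : Kc ≤ C := Submodule.map_subtype_le _ _
  have hKrank : finrank F Kc = k - 1 := by
    rw [hKc_def, Submodule.finrank_map_subtype_eq]
    have := aux_functional_ker evj hevne
    rw [hk] at this
    omega
  have hvan : ∀ y ∈ Kc, y j = 0 := by
    intro y hy
    rw [hKc_def] at hy
    obtain ⟨x, hxker, rfl⟩ := Submodule.mem_map.mp hy
    have := LinearMap.mem_ker.mp hxker
    rw [hevj_def] at this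
    simpa using this
  have hmemKc : ∀ (a : {w : Fin s → ↥C // LinearIndependent F w ∧
      ∀ i, ((w i : Fin n → F)) j = 0}) (i : Fin s), ((a.1 i : Fin n → F)) ∈ Kc := by
    intro a i
    rw [hKc_def]
    refine Submodule.mem_map_of_mem ?_
    rw [LinearMap.mem_ker, hevj_def]
    simpa using a.2.2 i
  have hto : ∀ a : {w : Fin s → ↥C // LinearIndependent F w ∧
      ∀ i, ((w i : Fin n → F)) j = 0},
      LinearIndependent F (fun i => (⟨(a.1 i : Fin n → F), hmemKc a i⟩ : ↥Kc)) := by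
    intro a
    rw [aux_li_subtype]
    exact (aux_li_subtype a.1).mp a.2.1
  have hinv : ∀ b : {w : Fin s → ↥Kc // LinearIndependent F w},
      LinearIndependent F (fun i => (⟨(b.1 i : Fin n → F), hKcC (b.1 i).2⟩ : ↥C)) := by
    intro b
    rw [aux_li_subtype]
    exact (aux_li_subtype b.1).mp b.2
  let e : {w : Fin s → ↥C // LinearIndependent F w ∧ ∀ i, ((w i : Fin n → F)) j = 0}
      ≃ {w : Fin s → ↥Kc // LinearIndependent F w} :=
    { toFun := fun a => ⟨fun i => ⟨(a.1 i : Fin n → F), hmemKc a i⟩, hto a⟩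
      invFun := fun b => ⟨fun i => ⟨(b.1 i : Fin n → F), hKcC (b.1 i).2⟩,
        hinv b, fun i => hvan _ (b.1 i).2⟩
      left_inv := fun a => Subtype.ext (funext fun i => Subtype.ext rfl)
      right_inv := fun b => Subtype.ext (funext fun i => Subtype.ext rfl) }
  rw [Nat.card_congr e]
  have hcnt := card_linearIndependent (K := F) (V := ↥Kc) (k := s) (by rw [hKrank]; omega)
  rw [hcnt, hq, hKrank]


/-- The first bound via double counting linearly independent tuples. -/
lemma aux_bound1 {n : ℕ} {C : Submodule F (Fin n → F)} {q k s : ℕ} (hq : Fintype.card F = q)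
    (hk : finrank F C = k) (hs1 : 1 ≤ s) (hsk : s ≤ k - 1)
    (hblk : ∀ W : Submodule F (Fin n → F), W ≤ C → finrank F W = s →
      k - s ≤ (csupp C \ csupp W).ncard) :
    (k - s) * (q ^ k - 1) ≤ n * (q ^ (k - s) - 1) := by
  classical
  have hq2 : 2 ≤ q := hq ▸ Fintype.one_lt_card
  have hk2 : 2 ≤ k := by omega
  have hsk' : s + 1 ≤ k := by omega
  haveI : FiniteDimensional F C := FiniteDimensional.finiteDimensional_submodule C
  letI : Fintype ↥C := Fintype.ofFinite _
  set Ntup := ∏ i : Fin s, (q ^ k - q ^ (i : ℕ)) with hNtup_def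
  set Mtup := ∏ i : Fin s, (q ^ (k - 1) - q ^ (i : ℕ)) with hMtup_def
  have hNtup : Fintype.card {w : Fin s → ↥C // LinearIndependent F w} = Ntup := by
    have hcnt := card_linearIndependent (K := F) (V := ↥C) (k := s) (by rw [hk]; omega)
    rw [← Nat.card_eq_fintype_card, hcnt, hq, hk]
  set A : Finset ({w : Fin s → ↥C // LinearIndependent F w} × Fin n) := Finset.univ.filter
    (fun p => p.2 ∈ csupp C ∧ ∀ i, ((p.1.1 i : Fin n → F)) p.2 = 0) with hA_def
  -- lower bound
  have hlow : (k - s) * Ntup ≤ A.card := by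
    have hfib := Finset.card_eq_sum_card_fiberwise
      (f := Prod.fst) (s := A) (t := Finset.univ) (fun p _ => Finset.mem_univ _)
    rw [hfib]
    calc (k - s) * Ntup
        = (Finset.univ : Finset {w : Fin s → ↥C // LinearIndependent F w}).card • (k - s) := by
          rw [Finset.card_univ, hNtup, smul_eq_mul, mul_comm]
      _ ≤ ∑ w : {w : Fin s → ↥C // LinearIndependent F w},
          (A.filter (fun p => p.1 = w)).card := by
          apply Finset.card_nsmul_le_sum
          intro w _
          have hWC : Submodule.map C.subtype (Submodule.span F (Set.range w.1)) ≤ C :=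
            Submodule.map_subtype_le _ _
          have hWs : finrank F (Submodule.map C.subtype (Submodule.span F (Set.range w.1))) = s := by
            rw [Submodule.finrank_map_subtype_eq, finrank_span_eq_card w.2, Fintype.card_fin]
          have hbw := hblk _ hWC hWs
          rw [Set.ncard_eq_toFinset_card'] at hbw
          refine le_trans hbw (Finset.card_le_card_of_injOn (fun j => (w, j)) ?_ ?_)
          · intro j hj
            rw [Finset.mem_coe, Set.mem_toFinset] at hj
            refine Finset.mem_filter.mpr ⟨Finset.mem_filter.mpr
              ⟨Finset.mem_univ _, hj.1, ?_⟩, rfl⟩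
            intro i
            exact aux_not_mem_csupp hj.2
              (Submodule.mem_map_of_mem (Submodule.subset_span (Set.mem_range_self i)))
          · intro a _ b _ hab
            simpa using congrArg Prod.snd hab
  -- upper bound
  have hupp : A.card ≤ n * Mtup := by
    have hfib := Finset.card_eq_sum_card_fiberwise
      (f := Prod.snd) (s := A) (t := Finset.univ) (fun p _ => Finset.mem_univ _)
    rw [hfib]
    calc ∑ j : Fin n, (A.filter (fun p => p.2 = j)).card
        ≤ (Finset.univ : Finset (Fin n)).card • Mtup := by
          apply Finset.sum_le_card_nsmul
          intro j _
          by_cases hjC : j ∈ csupp C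
          · have hfibcnt := aux_fiber (s := s) hq hk hsk hjC
            rw [Nat.card_eq_fintype_card, Fintype.card_subtype] at hfibcnt
            rw [hMtup_def, ← hfibcnt]
            apply Finset.card_le_card_of_injOn (fun p => p.1.1)
            · intro p hp
              simp only [hA_def, Finset.mem_coe, Finset.mem_filter, Finset.mem_univ, true_and] at hp
              obtain ⟨⟨hp1, hp2⟩, hpj⟩ := hp
              rw [Finset.mem_coe, Finset.mem_filter]
              exact ⟨Finset.mem_univ _, p.1.2, fun i => by rw [← hpj]; exact hp2 i⟩
            · intro p hp p' hp' hpp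
              simp only [Finset.mem_coe, hA_def, Finset.mem_filter, Finset.mem_univ,
                true_and] at hp hp'
              exact Prod.ext (Subtype.ext hpp) (by rw [hp.2, hp'.2])
          · have : A.filter (fun p => p.2 = j) = ∅ := by
              rw [Finset.filter_eq_empty_iff]
              rintro p hp rfl
              simp only [hA_def, Finset.mem_filter, Finset.mem_univ, true_and] at hp
              exact hjC hp.1
            rw [this]
            simp
      _ = n * Mtup := by rw [Finset.card_univ, Fintype.card_fin, smul_eq_mul]
  have hmain : (k - s) * Ntup ≤ n * Mtup := le_trans hlow hupp
  have hMpos : 0 < Mtup := by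
    rw [hMtup_def]
    apply Finset.prod_pos
    intro i _
    have : q ^ (i : ℕ) < q ^ (k - 1) :=
      Nat.pow_lt_pow_right (by omega) (by have := i.isLt; omega)
    omega
  have htel := aux_telescope q k (by omega) s (by omega)
  rw [← hNtup_def, ← hMtup_def] at htel
  have hfinal : ((k - s) * (q ^ k - 1)) * Mtup ≤ (n * (q ^ (k - s) - 1)) * Mtup := by
    calc ((k - s) * (q ^ k - 1)) * Mtup
        = (k - s) * ((q ^ k - 1) * Mtup) := by ring
      _ = (k - s) * (Ntup * (q ^ (k - s) - 1)) := by rw [← htel]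
      _ = ((k - s) * Ntup) * (q ^ (k - s) - 1) := by ring
      _ ≤ (n * Mtup) * (q ^ (k - s) - 1) := Nat.mul_le_mul_right _ hmain
      _ = (n * (q ^ (k - s) - 1)) * Mtup := by ring
  exact Nat.le_of_mul_le_mul_right hfinal hMpos

/-- The annihilator of a subspace with respect to the dot product. -/
def auxAnn {k : ℕ} (W : Submodule F (Fin k → F)) : Submodule F (Fin k → F) where
  carrier := {x | ∀ w ∈ W, w ⬝ᵥ x = 0}
  add_mem' := by
    intro a b ha hb
    intro w hw
    simp only [Set.mem_setOf_eq] at ha hb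
    simp [dotProduct_add, ha w hw, hb w hw]
  zero_mem' := by intro w hw; simp
  smul_mem' := by
    intro c a ha
    intro w hw
    simp only [Set.mem_setOf_eq] at ha
    simp [dotProduct_smul, ha w hw]

lemma auxAnn_mem {k : ℕ} {W : Submodule F (Fin k → F)} {x : Fin k → F} :
    x ∈ auxAnn W ↔ ∀ w ∈ W, w ⬝ᵥ x = 0 := Iff.rfl

lemma auxAnn_le {k : ℕ} {W₁ W₂ : Submodule F (Fin k → F)}
    (h : auxAnn W₁ ≤ auxAnn W₂) : W₂ ≤ W₁ := by
  intro w₂ hw₂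
  by_contra hni
  have hπ : W₁.mkQ w₂ ≠ 0 := by
    rw [Submodule.mkQ_apply, ne_eq, Submodule.Quotient.mk_eq_zero]
    exact hni
  obtain ⟨g, hg⟩ : ∃ g : Module.Dual F ((Fin k → F) ⧸ W₁), g (W₁.mkQ w₂) ≠ 0 := by
    by_contra hc
    push_neg at hc
    exact hπ ((Module.forall_dual_apply_eq_zero_iff F _).mp hc)
  set f : (Fin k → F) →ₗ[F] F := g ∘ₗ W₁.mkQ with hf_def
  set w₀ : Fin k → F := fun i => f (Pi.single i 1) with hw₀_def
  have key : ∀ y : Fin k → F, w₀ ⬝ᵥ y = f y := by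
    intro y
    conv_rhs => rw [← Finset.univ_sum_single y]
    rw [map_sum]
    rw [dotProduct]
    apply Finset.sum_congr rfl
    intro i _
    have hsingle : (Pi.single i (y i) : Fin k → F) = y i • (Pi.single i 1 : Fin k → F) := by
      funext l
      simp [Pi.single_apply, mul_ite]
    rw [hsingle, _root_.map_smul, smul_eq_mul, hw₀_def]
    ring
  have hw₀A : w₀ ∈ auxAnn W₁ := by
    intro w hw
    rw [dotProduct_comm, key, hf_def]
    simp only [LinearMap.coe_comp, Function.comp_apply, Submodule.mkQ_apply]
    rw [(Submodule.Quotient.mk_eq_zero W₁).mpr hw]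
    simp
  have := h hw₀A w₂ hw₂
  rw [dotProduct_comm, key] at this
  exact hg this

/-- Existence of an s-minimal code of any dimension. -/
lemma aux_exists (k s : ℕ) : ∃ (n : ℕ) (C : Submodule F (Fin n → F)),
    finrank F C = k ∧ SMinimal C s := by
  classical
  set N := Fintype.card (Fin k → F) with hN_def
  set e : Fin N ≃ (Fin k → F) := (Fintype.equivFin (Fin k → F)).symm with he_def
  set Φ : (Fin k → F) →ₗ[F] (Fin N → F) :=
    { toFun := fun v => fun j => v ⬝ᵥ (e j)
      map_add' := by intro a b; funext j; simp [add_dotProduct]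
      map_smul' := by intro c a; funext j; simp [smul_dotProduct] } with hΦ_def
  have hΦ_apply : ∀ (v : Fin k → F) (j : Fin N), Φ v j = v ⬝ᵥ (e j) := fun _ _ => rfl
  have hinj : Function.Injective Φ := by
    intro v v' hvv
    have hdot : ∀ x : Fin k → F, v ⬝ᵥ x = v' ⬝ᵥ x := by
      intro x
      have := congrFun hvv (e.symm x)
      rwa [hΦ_apply, hΦ_apply, Equiv.apply_symm_apply] at this
    funext i
    have := hdot (Pi.single i 1)
    rwa [dotProduct_single, dotProduct_single, mul_one, mul_one] at this
  refine ⟨N, LinearMap.range Φ, ?_, ?_⟩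
  · rw [LinearMap.finrank_range_of_inj hinj, Module.finrank_pi, Fintype.card_fin]
  · intro U hUC hUs
    refine ⟨hUC, hUs, ?_⟩
    intro V hVC hVs hsupp
    set WU := Submodule.comap Φ U with hWU_def
    set WV := Submodule.comap Φ V with hWV_def
    have hUmap : Submodule.map Φ WU = U := by
      rw [hWU_def, Submodule.map_comap_eq, inf_eq_right.mpr hUC]
    have hVmap : Submodule.map Φ WV = V := by
      rw [hWV_def, Submodule.map_comap_eq, inf_eq_right.mpr hVC]
    have hWUrank : finrank F WU = s := by
      rw [← hUs, ← hUmap]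
      exact (Submodule.equivMapOfInjective Φ hinj WU).finrank_eq
    have hWVrank : finrank F WV = s := by
      rw [← hVs, ← hVmap]
      exact (Submodule.equivMapOfInjective Φ hinj WV).finrank_eq
    have hann : auxAnn WU ≤ auxAnn WV := by
      intro x hx
      have hjU : e.symm x ∉ csupp U := by
        rintro ⟨u, huU, huj⟩
        rw [← hUmap] at huU
        obtain ⟨w, hwWU, rfl⟩ := Submodule.mem_map.mp huU
        rw [hΦ_apply, Equiv.apply_symm_apply] at huj
        exact huj (hx w hwWU)
      have hjV : e.symm x ∉ csupp V := fun hj => hjU (hsupp hj)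
      intro w hwWV
      have hΦw : Φ w ∈ V := by rw [← hVmap]; exact Submodule.mem_map_of_mem hwWV
      have : Φ w (e.symm x) = 0 := by
        by_contra hne
        exact hjV ⟨Φ w, hΦw, hne⟩
      rwa [hΦ_apply, Equiv.apply_symm_apply] at this
    have hWVWU : WV ≤ WU := auxAnn_le hann
    have : WV = WU := Submodule.eq_of_le_of_finrank_le hWVWU (by rw [hWUrank, hWVrank])
    rw [← hVmap, this, hUmap]

end AuxHelpers

set_option maxHeartbeats 1000000
set_option synthInstance.maxHeartbeats 400000

/-- `m(k,s,q) ≥ (k-s)(q^k-1)/(q^{k-s}-1)` (multiplied-out form), and if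
`k - s ≤ q` then `m(k,s,q) ≥ (k-s)(q^{s+1}-1)/(q-1)` (multiplied-out form). -/
theorem minSMinimalLength_lower_bounds (k s q : ℕ) (hq : Fintype.card F = q)
    (hs1 : 1 ≤ s) (hs2 : s ≤ k - 1) :
    (k - s) * (q ^ k - 1) ≤ minSMinimalLength F k s * (q ^ (k - s) - 1) ∧
    (k - s ≤ q → (k - s) * (q ^ (s + 1) - 1) ≤ minSMinimalLength F k s * (q - 1)) := by
  classical
  have hq2 : 2 ≤ q := hq ▸ Fintype.one_lt_card
  have hk2 : 2 ≤ k := by omega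
  have hne : {n | ∃ C : Submodule F (Fin n → F), Module.finrank F C = k ∧ SMinimal C s}.Nonempty := by
    obtain ⟨n, C, h1, h2⟩ := aux_exists (F := F) k s
    exact ⟨n, C, h1, h2⟩
  obtain ⟨C, hCk, hCmin⟩ :
      ∃ C : Submodule F (Fin (minSMinimalLength F k s) → F), finrank F C = k ∧ SMinimal C s :=
    Nat.sInf_mem hne
  have hblk : ∀ W : Submodule F (Fin (minSMinimalLength F k s) → F), W ≤ C →
      finrank F W = s → k - s ≤ (csupp C \ csupp W).ncard :=
    fun W hWC hWs => aux_blocking_s16 hCmin hs1 hCk hWC hWs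
  constructor
  · exact aux_bound1 hq hCk hs1 hs2 hblk
  · intro hts
    have hL := aux_L hq (k - s) (k - s) s (by rw [hCk]; omega) hts hblk
    refine le_trans hL ?_
    have hle : (csupp C).ncard ≤ minSMinimalLength F k s := by
      have := Set.ncard_le_ncard (Set.subset_univ (csupp C)) Set.finite_univ
      rwa [Set.ncard_univ, Nat.card_eq_fintype_card, Fintype.card_fin] at this
    exact Nat.mul_le_mul_right _ hle
end
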